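/- arXiv:2303.01434 — 6 statements merged into one kernel-verified Lean document; each statement's English description precedes it below -/
import Mathlib

section
/- The function f : [0,1] → c₀ defined by mapping an enumeration of the rationals in [0,1] to the standard unit vectors of c₀ and all irrationals to 0 is Riemann-integrable with Riemann integral 0. -/
open Finset MeasureTheory

structure TaggedPartition where
  n : ℕ
  p : ℕ → ℝ
  t : ℕ → ℝ
  n_pos : 0 < n
  p_zero : p 0 = 0
  p_last : p n = 1
  p_mono : ∀ i < n, p i < p (i + 1)
  t_mem : ∀ i < n, t i ∈ Set.Icc (p i) (p (i + 1))

def TaggedPartition.MeshLt (P : TaggedPartition) (δ : ℝ) : Prop :=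
  ∀ i < P.n, P.p (i + 1) - P.p i < δ

noncomputable def riemannSum {X : Type*} [NormedAddCommGroup X] [NormedSpace ℝ X]
    (f : ℝ → X) (P : TaggedPartition) : X :=
  ∑ i ∈ Finset.range P.n, (P.p (i + 1) - P.p i) • f (P.t i)

def HasRiemannIntegral {X : Type*} [NormedAddCommGroup X] [NormedSpace ℝ X]
    (f : ℝ → X) (x : X) : Prop :=
  ∀ ε > (0 : ℝ), ∃ δ > (0 : ℝ), ∀ P : TaggedPartition, P.MeshLt δ →
    ‖x - riemannSum f P‖ < ε

def RiemannIntegrable {X : Type*} [NormedAddCommGroup X] [NormedSpace ℝ X]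
    (f : ℝ → X) : Prop :=
  ∃ x, HasRiemannIntegral f x

def LebesgueProperty (X : Type*) [NormedAddCommGroup X] [NormedSpace ℝ X] : Prop :=
  ∀ f : ℝ → X, RiemannIntegrable f →
    ∀ᵐ t ∂(MeasureTheory.volume.restrict (Set.Icc (0 : ℝ) 1)),
      ContinuousWithinAt f (Set.Icc (0 : ℝ) 1) t

/-- The rationals in `[0,1]`, as a subtype of `ℝ`. -/
def RatIn01 : Type := {t : ℝ // t ∈ Set.Icc (0 : ℝ) 1 ∧ ∃ r : ℚ, (r : ℝ) = t}

/-!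
Coordinate `m` of a Riemann sum of `f` is the total length of the intervals whose tag is the
`m`-th rational. A tag lies in its own closed interval and the partition points increase
strictly, so one point is the tag of at most two (adjacent) intervals. Hence every coordinate,
and so the sup norm, of the Riemann sum is at most twice the mesh.
-/

namespace TaggedPartition

variable (P : TaggedPartition)

lemma strictMonoOn_p : StrictMonoOn P.p (Set.Iic P.n) :=
  strictMonoOn_Iic_of_lt_succ fun m hm => by simpa using P.p_mono m hm

lemma MeshLt.pos {P : TaggedPartition} {δ : ℝ} (hP : P.MeshLt δ) : 0 < δ :=
  (sub_pos.2 (P.p_mono 0 P.n_pos)).trans (hP 0 P.n_pos)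

lemma eq_add_one_of_lt_of_t_eq {i j : ℕ} (hij : i < j) (hj : j < P.n) (htij : P.t i = P.t j) :
    j = i + 1 := by
  by_contra hne
  have hlt : P.p (i + 1) < P.p j :=
    P.strictMonoOn_p (Set.mem_Iic.2 (by omega)) (Set.mem_Iic.2 hj.le) (by omega)
  have hti := (P.t_mem i (hij.trans hj)).2
  have htj := (P.t_mem j hj).1
  linarith

lemma card_filter_t_eq_le_two (c : ℝ) : #{i ∈ range P.n | P.t i = c} ≤ 2 := by
  set s := {i ∈ range P.n | P.t i = c}
  rcases s.eq_empty_or_nonempty with hs | hs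
  · simp [hs]
  have hsub : s ⊆ {s.min' hs, s.min' hs + 1} := by
    intro j hj
    obtain ⟨-, hti⟩ := mem_filter.1 (s.min'_mem hs)
    obtain ⟨hj', htj⟩ := mem_filter.1 hj
    rcases (s.min'_le j hj).eq_or_lt with heq | hlt
    · simp [← heq]
    · simp [P.eq_add_one_of_lt_of_t_eq hlt (mem_range.1 hj') (hti.trans htj.symm)]
  exact (card_le_card hsub).trans card_le_two

lemma sum_filter_t_eq_le {δ : ℝ} (hP : P.MeshLt δ) (c : ℝ) :
    ∑ i ∈ range P.n with P.t i = c, (P.p (i + 1) - P.p i) ≤ 2 * δ :=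
  calc _ ≤ #{i ∈ range P.n | P.t i = c} • δ :=
        sum_le_card_nsmul _ _ _ fun i hi => (hP i (mem_range.1 (mem_filter.1 hi).1)).le
    _ ≤ 2 • δ := nsmul_le_nsmul_left hP.pos.le (P.card_filter_t_eq_le_two c)
    _ = 2 * δ := by rw [nsmul_eq_mul, Nat.cast_ofNat]

lemma sum_filter_t_eq_nonneg (c : ℝ) :
    0 ≤ ∑ i ∈ range P.n with P.t i = c, (P.p (i + 1) - P.p i) :=
  sum_nonneg fun i hi => (sub_pos.2 (P.p_mono i (mem_range.1 (mem_filter.1 hi).1))).le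

end TaggedPartition

section ZeroAtInfty

variable {α : Type*} [TopologicalSpace α]

lemma riemannSum_apply (f : ℝ → ZeroAtInftyContinuousMap α ℝ) (P : TaggedPartition) (x : α) :
    riemannSum f P x = ∑ i ∈ range P.n, (P.p (i + 1) - P.p i) * f (P.t i) x :=
  map_sum (⟨⟨fun g => g x, rfl⟩, fun _ _ => rfl⟩ : ZeroAtInftyContinuousMap α ℝ →+ ℝ) _ _

lemma riemannSum_apply_of_apply_eq_ite {a : α → ℝ} {f : ℝ → ZeroAtInftyContinuousMap α ℝ}
    (hf : ∀ t x, f t x = if t = a x then 1 else 0) (P : TaggedPartition) (x : α) :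
    riemannSum f P x = ∑ i ∈ range P.n with P.t i = a x, (P.p (i + 1) - P.p i) := by
  rw [riemannSum_apply, sum_filter]
  refine sum_congr rfl fun i _ => ?_
  simp [hf]

lemma norm_riemannSum_le_of_apply_eq_ite {a : α → ℝ} {f : ℝ → ZeroAtInftyContinuousMap α ℝ}
    (hf : ∀ t x, f t x = if t = a x then 1 else 0) {P : TaggedPartition} {δ : ℝ}
    (hP : P.MeshLt δ) : ‖riemannSum f P‖ ≤ 2 * δ := by
  rw [← ZeroAtInftyContinuousMap.norm_toBCF_eq_norm,
    BoundedContinuousFunction.norm_le (by linarith [hP.pos])]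
  intro x
  change ‖riemannSum f P x‖ ≤ 2 * δ
  rw [riemannSum_apply_of_apply_eq_ite hf, Real.norm_of_nonneg (P.sum_filter_t_eq_nonneg _)]
  exact P.sum_filter_t_eq_le hP _

theorem hasRiemannIntegral_zero_of_apply_eq_ite {a : α → ℝ}
    {f : ℝ → ZeroAtInftyContinuousMap α ℝ} (hf : ∀ t x, f t x = if t = a x then 1 else 0) :
    HasRiemannIntegral f 0 := by
  intro ε hε
  refine ⟨ε / 3, by positivity, fun P hP => ?_⟩
  rw [zero_sub, norm_neg]
  linarith [norm_riemannSum_le_of_apply_eq_ite hf hP]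

end ZeroAtInfty

theorem c0_unit_vector_function_riemann_integrable
    (e : ℕ → ZeroAtInftyContinuousMap ℕ ℝ)
    (he : ∀ n m : ℕ, e n m = if m = n then 1 else 0)
    (q : ℕ ≃ RatIn01)
    (f : ℝ → ZeroAtInftyContinuousMap ℕ ℝ)
    (hf_rat : ∀ (t : ℝ) (h : t ∈ Set.Icc (0 : ℝ) 1 ∧ ∃ r : ℚ, (r : ℝ) = t),
      f t = e (q.symm ⟨t, h⟩))
    (hf_irr : ∀ t : ℝ, ¬(t ∈ Set.Icc (0 : ℝ) 1 ∧ ∃ r : ℚ, (r : ℝ) = t) → f t = 0) :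
    HasRiemannIntegral f 0 := by
  refine hasRiemannIntegral_zero_of_apply_eq_ite (a := fun m => (q m).val) fun t m => ?_
  by_cases ht : t ∈ Set.Icc (0 : ℝ) 1 ∧ ∃ r : ℚ, (r : ℝ) = t
  · rw [hf_rat t ht, he]
    exact if_congr (q.eq_symm_apply.trans (Subtype.ext_iff.trans eq_comm)) rfl rfl
  · rw [hf_irr t ht, if_neg fun h : t = (q m).val => ht (h ▸ Subtype.property (q m))]
    rfl
end

section
/- A function f : [0,1] → X is Riemann-integrable if and only if there exists x ∈ X such that for every ε > 0 there is n ∈ ℕ so that for all m ≥ n and every choice of interior tags tᵢ ∈ ((i−1)/2ᵐ, i/2ᵐ) for 1 ≤ i ≤ 2ᵐ, one has ‖x − 2^{−m} Σ_{i=1}^{2ᵐ} f(tᵢ)‖ < ε. -/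
open Finset MeasureTheory

/-!
Fix a uniform grid of mesh `1/N` on which the criterion holds to within `ε`. Since the criterion
asks a uniform sum to lie in a convex set, it persists when each value `f (t j)` is replaced by a
convex combination of values of `f` on the `j`-th open grid cell. Cutting the cells of a tagged
partition `P` of mesh `δ` along the grid writes its Riemann sum, grid cell by grid cell, as such
convex combinations (weighted by the lengths of the pieces), up to the at most two cells of `P`
per grid cell that straddle an endpoint; these cost `O(N δ sup ‖f‖)`. Finally `f` is bounded on
`[0, 1]`: the criterion bounds its oscillation on each open grid cell, leaving finitely many grid
points.
-/

lemma sum_Icc_one_eq_sum_range {M : Type*} [AddCommMonoid M] (g : ℕ → M) (N : ℕ) :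
    ∑ j ∈ Icc 1 N, g j = ∑ k ∈ range N, g (k + 1) := by
  rw [range_eq_Ico, sum_Ico_add' g 0 N 1]
  rfl

open scoped Pointwise in
lemma Convex.sum_mem_of_mem_convexHull {𝕜 ι E : Type*} [Field 𝕜] [LinearOrder 𝕜]
    [IsStrictOrderedRing 𝕜] [AddCommGroup E] [Module 𝕜 E]
    {K : Set E} (hK : Convex 𝕜 K) {s : Finset ι} {C : ι → Set E}
    (hC : ∀ g : ι → E, (∀ i ∈ s, g i ∈ C i) → ∑ i ∈ s, g i ∈ K)
    {v : ι → E} (hv : ∀ i ∈ s, v i ∈ convexHull 𝕜 (C i)) :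
    ∑ i ∈ s, v i ∈ K := by
  have hsum : ∑ i ∈ s, C i ⊆ K := by
    intro y hy
    obtain ⟨g, hg, rfl⟩ := (Set.mem_finsetSum s C y).1 hy
    exact hC g fun i hi => hg hi
  refine convexHull_min hsum hK ?_
  rw [convexHull_sum]
  exact Set.finsetSum_mem_finsetSum s _ v hv

def overlap (a b c d : ℝ) : ℝ := max (min b d - max a c) 0

section Overlap

variable {a b c d : ℝ}

lemma overlap_comm (a b c d : ℝ) : overlap a b c d = overlap c d a b := by
  rw [overlap, overlap, min_comm b d, max_comm a c]

lemma overlap_nonneg : 0 ≤ overlap a b c d := le_max_right _ _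

lemma overlap_le_sub (hab : a ≤ b) : overlap a b c d ≤ b - a :=
  max_le (by linarith [min_le_left b d, le_max_left a c]) (sub_nonneg.2 hab)

lemma lt_and_lt_of_overlap_ne_zero (h : overlap a b c d ≠ 0) : c < b ∧ a < d := by
  have hpos : max a c < min b d := by
    by_contra! hle
    exact h (max_eq_right (sub_nonpos.2 hle))
  exact ⟨(le_max_right a c).trans_lt (hpos.trans_le (min_le_left b d)),
    (le_max_left a c).trans_lt (hpos.trans_le (min_le_right b d))⟩

lemma overlap_eq_sub_clamp (hab : a ≤ b) (hcd : c ≤ d) :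
    overlap a b c d = min (max b c) d - min (max a c) d := by
  simp only [overlap, min_def, max_def]
  split_ifs <;> linarith

lemma sum_overlap_eq_sub {q : ℕ → ℝ} {n : ℕ} (hq : ∀ k < n, q k ≤ q (k + 1))
    (hc : q 0 ≤ c) (hcd : c ≤ d) (hd : d ≤ q n) :
    ∑ k ∈ range n, overlap (q k) (q (k + 1)) c d = d - c := by
  rw [sum_congr rfl fun k hk => overlap_eq_sub_clamp (hq k (mem_range.1 hk)) hcd,
    sum_range_sub (fun k => min (max (q k) c) d), max_eq_left (hcd.trans hd), min_eq_right hd,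
    max_eq_right hc, min_eq_left hcd]

end Overlap

namespace TaggedPartition

variable (P : TaggedPartition)

lemma monotoneOn_p : MonotoneOn P.p (Set.Iic P.n) :=
  (strictMonoOn_Iic_of_lt_succ P.p_mono).monotoneOn

lemma p_mem_Icc {i : ℕ} (hi : i ≤ P.n) : P.p i ∈ Set.Icc (0 : ℝ) 1 :=
  ⟨P.p_zero ▸ P.monotoneOn_p (Nat.zero_le _) hi (Nat.zero_le i),
    P.p_last ▸ P.monotoneOn_p hi (le_refl P.n) hi⟩

lemma t_mem_Icc {i : ℕ} (hi : i < P.n) : P.t i ∈ Set.Icc (0 : ℝ) 1 :=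
  ⟨(P.p_mem_Icc hi.le).1.trans (P.t_mem i hi).1, (P.t_mem i hi).2.trans (P.p_mem_Icc hi).2⟩

lemma p_succ_le_of_lt {i k : ℕ} (hik : i < k) (hk : k ≤ P.n) : P.p (i + 1) ≤ P.p k :=
  P.monotoneOn_p (hik.trans_le hk) hk hik

lemma card_filter_mem_Ico_le_one (y : ℝ) :
    #{i ∈ range P.n | y ∈ Set.Ico (P.p i) (P.p (i + 1))} ≤ 1 := by
  refine card_le_one.2 fun i hi k hk => ?_
  simp only [mem_filter, mem_range, Set.mem_Ico] at hi hk
  by_contra hne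
  rcases Nat.lt_or_gt_of_ne hne with h | h
  · linarith [P.p_succ_le_of_lt h hk.1.le]
  · linarith [P.p_succ_le_of_lt h hi.1.le]

lemma card_filter_mem_Ioc_le_one (y : ℝ) :
    #{i ∈ range P.n | y ∈ Set.Ioc (P.p i) (P.p (i + 1))} ≤ 1 := by
  refine card_le_one.2 fun i hi k hk => ?_
  simp only [mem_filter, mem_range, Set.mem_Ioc] at hi hk
  by_contra hne
  rcases Nat.lt_or_gt_of_ne hne with h | h
  · linarith [P.p_succ_le_of_lt h hk.1.le]
  · linarith [P.p_succ_le_of_lt h hi.1.le]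

lemma sum_overlap {c d : ℝ} (hc : 0 ≤ c) (hcd : c ≤ d) (hd : d ≤ 1) :
    ∑ i ∈ range P.n, overlap (P.p i) (P.p (i + 1)) c d = d - c :=
  sum_overlap_eq_sub (fun i hi => (P.p_mono i hi).le) (P.p_zero ▸ hc) hcd (P.p_last ▸ hd)

lemma pos_of_meshLt {δ : ℝ} (hP : P.MeshLt δ) : 0 < δ :=
  (sub_pos.2 (P.p_mono 0 P.n_pos)).trans (hP 0 P.n_pos)

/-- Only the (at most two) cells of `P` containing an endpoint of `[a, b]` contribute. -/
lemma norm_sum_overlap_smul_le {X : Type*} [NormedAddCommGroup X] [NormedSpace ℝ X]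
    {δ : ℝ} (hP : P.MeshLt δ) {a b C : ℝ} {g : ℕ → X} (hg : ∀ i < P.n, ‖g i‖ ≤ C)
    (hg₀ : ∀ i < P.n, P.t i ∈ Set.Ioo a b → g i = 0) :
    ‖∑ i ∈ range P.n, overlap (P.p i) (P.p (i + 1)) a b • g i‖ ≤ 2 * C * δ := by
  classical
  set T := {i ∈ range P.n | a ∈ Set.Ico (P.p i) (P.p (i + 1))} ∪
    {i ∈ range P.n | b ∈ Set.Ioc (P.p i) (P.p (i + 1))}
  have hC : 0 ≤ C := (norm_nonneg _).trans (hg 0 P.n_pos)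
  have hT : T ⊆ range P.n := union_subset (filter_subset _ _) (filter_subset _ _)
  have hcard : #T ≤ 2 :=
    (card_union_le _ _).trans (add_le_add (P.card_filter_mem_Ico_le_one a)
      (P.card_filter_mem_Ioc_le_one b))
  have hvanish :
      ∀ i ∈ range P.n, i ∉ T → overlap (P.p i) (P.p (i + 1)) a b • g i = 0 := by
    intro i hi hiT
    have hi' := mem_range.1 hi
    by_contra hne
    obtain ⟨hl, hg'⟩ := smul_ne_zero_iff.1 hne
    obtain ⟨ha, hb⟩ := lt_and_lt_of_overlap_ne_zero hl
    obtain ⟨ht₁, ht₂⟩ := P.t_mem i hi'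
    refine hiT ?_
    rcases le_or_gt (P.t i) a with hta | hta
    · exact mem_union_left _ (mem_filter.2 ⟨hi, ht₁.trans hta, ha⟩)
    · rcases lt_or_ge (P.t i) b with htb | htb
      · exact absurd (hg₀ i hi' ⟨hta, htb⟩) hg'
      · exact mem_union_right _ (mem_filter.2 ⟨hi, hb, htb.trans ht₂⟩)
  have hterm : ∀ i ∈ T, ‖overlap (P.p i) (P.p (i + 1)) a b • g i‖ ≤ C * δ := by
    intro i hi
    have hi' := mem_range.1 (hT hi)
    rw [norm_smul, Real.norm_of_nonneg overlap_nonneg]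
    rw [mul_comm C]
    exact mul_le_mul ((overlap_le_sub (P.p_mono i hi').le).trans (hP i hi').le) (hg i hi')
      (norm_nonneg _) (P.pos_of_meshLt hP).le
  calc ‖∑ i ∈ range P.n, overlap (P.p i) (P.p (i + 1)) a b • g i‖
      = ‖∑ i ∈ T, overlap (P.p i) (P.p (i + 1)) a b • g i‖ := by
        rw [sum_subset hT hvanish]
    _ ≤ ∑ i ∈ T, ‖overlap (P.p i) (P.p (i + 1)) a b • g i‖ := norm_sum_le _ _
    _ ≤ #T • (C * δ) := sum_le_card_nsmul _ _ _ hterm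
    _ ≤ 2 • (C * δ) := nsmul_le_nsmul_left (mul_nonneg hC (P.pos_of_meshLt hP).le) hcard
    _ = 2 * C * δ := by rw [two_nsmul]; ring

end TaggedPartition

def uniformCell (N j : ℕ) : Set ℝ := Set.Ioo (((j : ℝ) - 1) / N) (j / N)

section UniformCell

variable {N : ℕ}

lemma uniformCell_nonempty (hN : 0 < N) (j : ℕ) : (uniformCell N j).Nonempty :=
  Set.nonempty_Ioo.2 (div_lt_div_of_pos_right (sub_one_lt _) (Nat.cast_pos.2 hN))

lemma uniformCell_subset_Icc {j : ℕ} (hj : j ∈ Icc 1 N) : uniformCell N j ⊆ Set.Icc 0 1 := by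
  obtain ⟨hj₁, hjN⟩ := mem_Icc.1 hj
  have hN : (0 : ℝ) < N := by exact_mod_cast hj₁.trans hjN
  intro s ⟨hs₁, hs₂⟩
  refine ⟨(div_nonneg ?_ hN.le).trans hs₁.le, hs₂.le.trans ((div_le_one hN).2 ?_)⟩
  exacts [sub_nonneg.2 (by exact_mod_cast hj₁), by exact_mod_cast hjN]

lemma exists_eq_div_or_mem_uniformCell (hN : 0 < N) {s : ℝ} (hs : s ∈ Set.Icc (0 : ℝ) 1) :
    (∃ k ≤ N, s = k / N) ∨ ∃ j ∈ Icc 1 N, s ∈ uniformCell N j := by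
  have hN' : (0 : ℝ) < N := Nat.cast_pos.2 hN
  have hsN : 0 ≤ s * N := mul_nonneg hs.1 hN'.le
  have hkN : ⌈s * N⌉₊ ≤ N := Nat.ceil_le.2 (by nlinarith [hs.2])
  rcases eq_or_lt_of_le (Nat.le_ceil (s * N)) with heq | hlt
  · exact Or.inl ⟨_, hkN, by rw [← heq, mul_div_cancel_right₀ _ hN'.ne']⟩
  · have hk : 1 ≤ ⌈s * N⌉₊ := Nat.one_le_iff_ne_zero.2 fun h0 => by
      rw [h0, Nat.cast_zero] at hlt; linarith
    refine Or.inr ⟨_, mem_Icc.2 ⟨hk, hkN⟩, ?_, ?_⟩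
    · rw [div_lt_iff₀ hN']; linarith [Nat.ceil_lt_add_one hsN]
    · rw [lt_div_iff₀ hN']; exact hlt

lemma sum_overlap_uniformCell (hN : 0 < N) {c d : ℝ} (hc : 0 ≤ c) (hcd : c ≤ d)
    (hd : d ≤ 1) :
    ∑ j ∈ Icc 1 N, overlap c d (((j : ℝ) - 1) / N) (j / N) = d - c := by
  have hN' : (0 : ℝ) < N := Nat.cast_pos.2 hN
  rw [sum_Icc_one_eq_sum_range]
  have hcast : ∀ k : ℕ, ((k + 1 : ℕ) : ℝ) - 1 = k := fun k => by push_cast; ring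
  simp_rw [overlap_comm c d, hcast]
  refine sum_overlap_eq_sub (q := fun k : ℕ => (k : ℝ) / N) (fun k _ => ?_) ?_ hcd ?_
  · gcongr; exact_mod_cast k.le_succ
  · simpa using hc
  · simpa [div_self hN'.ne'] using hd

lemma TaggedPartition.sum_overlap_uniformCell (P : TaggedPartition) {j : ℕ}
    (hj : j ∈ Icc 1 N) :
    ∑ i ∈ range P.n, overlap (P.p i) (P.p (i + 1)) (((j : ℝ) - 1) / N) (j / N) =
      (N : ℝ)⁻¹ := by
  obtain ⟨hj₁, hjN⟩ := mem_Icc.1 hj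
  have hN : (0 : ℝ) < N := by exact_mod_cast hj₁.trans hjN
  rw [P.sum_overlap (div_nonneg (sub_nonneg.2 (by exact_mod_cast hj₁)) hN.le)
    (by gcongr; linarith) ((div_le_one hN).2 (by exact_mod_cast hjN))]
  field_simp
  ring

end UniformCell

section UniformSums

variable {X : Type*} [NormedAddCommGroup X] [NormedSpace ℝ X]

def UniformSumsNear (f : ℝ → X) (x : X) (N : ℕ) (ε : ℝ) : Prop :=
  ∀ t : ℕ → ℝ, (∀ j ∈ Icc 1 N, t j ∈ uniformCell N j) →
    ‖x - (N : ℝ)⁻¹ • ∑ j ∈ Icc 1 N, f (t j)‖ < ε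

lemma TaggedPartition.riemannSum_eq_sum_overlap (P : TaggedPartition) (f : ℝ → X) {N : ℕ}
    (hN : 0 < N) : riemannSum f P = ∑ j ∈ Icc 1 N, ∑ i ∈ range P.n,
      overlap (P.p i) (P.p (i + 1)) (((j : ℝ) - 1) / N) (j / N) • f (P.t i) := by
  rw [riemannSum, sum_comm]
  refine sum_congr rfl fun i hi => ?_
  have hi' := mem_range.1 hi
  rw [← sum_smul, _root_.sum_overlap_uniformCell hN (P.p_mem_Icc hi'.le).1 (P.p_mono i hi').le
    (P.p_mem_Icc hi').2]

namespace UniformSumsNear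

variable {f : ℝ → X} {x : X} {N : ℕ} {ε : ℝ}

lemma norm_sub_lt_of_mem_convexHull (hx : UniformSumsNear f x N ε) {v : ℕ → X}
    (hv : ∀ j ∈ Icc 1 N, v j ∈ convexHull ℝ (f '' uniformCell N j)) :
    ‖x - (N : ℝ)⁻¹ • ∑ j ∈ Icc 1 N, v j‖ < ε := by
  classical
  have hK : Convex ℝ {y : X | ‖x - (N : ℝ)⁻¹ • y‖ < ε} := by
    have hset : {y : X | ‖x - (N : ℝ)⁻¹ • y‖ < ε} =
        (fun y => (N : ℝ)⁻¹ • y) ⁻¹' Metric.ball x ε := by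
      ext y
      simp [dist_eq_norm, norm_sub_rev]
    exact hset ▸ (convex_ball x ε).smul_preimage _
  refine hK.sum_mem_of_mem_convexHull (fun g hg => ?_) hv
  have hpick : ∀ j, ∃ s, j ∈ Icc 1 N → s ∈ uniformCell N j ∧ f s = g j := fun j => by
    by_cases hj : j ∈ Icc 1 N
    · obtain ⟨s, hs, hfs⟩ := hg j hj
      exact ⟨s, fun _ => ⟨hs, hfs⟩⟩
    · exact ⟨0, fun h => absurd h hj⟩
  choose t ht using hpick
  have := hx t fun j hj => (ht j hj).1
  rwa [sum_congr rfl fun j hj => (ht j hj).2] at this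

lemma norm_sub_lt (hx : UniformSumsNear f x N ε) {j : ℕ} (hj : j ∈ Icc 1 N) {s s' : ℝ}
    (hs : s ∈ uniformCell N j) (hs' : s' ∈ uniformCell N j) :
    ‖f s - f s'‖ < 2 * ε * N := by
  classical
  have hN : 0 < N := by have := mem_Icc.1 hj; omega
  have hN' : (0 : ℝ) < N := Nat.cast_pos.2 hN
  set c : ℕ → ℝ := fun k => (uniformCell_nonempty hN k).some
  have htag : ∀ r ∈ uniformCell N j, ∀ k ∈ Icc 1 N,
      Function.update c j r k ∈ uniformCell N k := by
    intro r hr k _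
    by_cases hk : k = j
    · subst hk; simpa using hr
    · simpa [hk] using (uniformCell_nonempty hN k).some_mem
  have hsum : ∀ r, ∑ k ∈ Icc 1 N, f (Function.update c j r k)
      = f r + ∑ k ∈ (Icc 1 N).erase j, f (c k) := fun r => by
    rw [← add_sum_erase _ _ hj, Function.update_self]
    congr 1
    exact sum_congr rfl fun k hk => by rw [Function.update_of_ne (ne_of_mem_erase hk)]
  have h₁ := hx _ (htag s hs)
  have h₂ := hx _ (htag s' hs')
  rw [hsum] at h₁ h₂
  have : (N : ℝ)⁻¹ * ‖f s - f s'‖ < 2 * ε := by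
    calc (N : ℝ)⁻¹ * ‖f s - f s'‖
        = ‖(x - (N : ℝ)⁻¹ • (f s' + ∑ k ∈ (Icc 1 N).erase j, f (c k)))
            - (x - (N : ℝ)⁻¹ • (f s + ∑ k ∈ (Icc 1 N).erase j, f (c k)))‖ := by
          rw [← norm_smul_of_nonneg (inv_nonneg.2 hN'.le)]
          congr 1
          simp only [smul_add, smul_sub]
          abel
      _ ≤ _ := norm_sub_le _ _
      _ < ε + ε := add_lt_add h₂ h₁
      _ = 2 * ε := by ring
  rwa [inv_mul_lt_iff₀ hN', mul_comm] at this

lemma exists_norm_le (hx : UniformSumsNear f x N ε) (hN : 0 < N) :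
    ∃ B, ∀ s ∈ Set.Icc (0 : ℝ) 1, ‖f s‖ ≤ B := by
  set c : ℕ → ℝ := fun k => (uniformCell_nonempty hN k).some
  have hbdd : Bornology.IsBounded ((⋃ j ∈ Icc 1 N, Metric.closedBall (f (c j)) (2 * ε * N)) ∪
      (fun k : ℕ => f (k / N)) '' Set.Iic N) :=
    ((Bornology.isBounded_biUnion_finset _).2 fun _ _ => Metric.isBounded_closedBall).union
      ((Set.finite_Iic N).image _).isBounded
  obtain ⟨B, hB⟩ := isBounded_iff_forall_norm_le.1 hbdd
  refine ⟨B, fun s hs => hB _ ?_⟩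
  rcases exists_eq_div_or_mem_uniformCell hN hs with ⟨k, hk, rfl⟩ | ⟨j, hj, hsj⟩
  · exact Or.inr ⟨k, hk, rfl⟩
  · refine Or.inl (Set.mem_biUnion hj ?_)
    rw [Metric.mem_closedBall, dist_eq_norm]
    exact (hx.norm_sub_lt hj hsj (uniformCell_nonempty hN j).some_mem).le

end UniformSumsNear

lemma norm_sub_riemannSum_lt {f : ℝ → X} {x : X} {N : ℕ} {ε B δ : ℝ}
    (hB : ∀ s ∈ Set.Icc (0 : ℝ) 1, ‖f s‖ ≤ B) (hN : 0 < N)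
    (hx : UniformSumsNear f x N ε) (P : TaggedPartition) (hP : P.MeshLt δ) :
    ‖x - riemannSum f P‖ < ε + 4 * B * N * δ := by
  classical
  have hN' : (0 : ℝ) < N := Nat.cast_pos.2 hN
  set ℓ : ℕ → ℕ → ℝ := fun j i =>
    overlap (P.p i) (P.p (i + 1)) (((j : ℝ) - 1) / N) (j / N)
  set τ : ℕ → ℕ → ℝ := fun j i =>
    if P.t i ∈ uniformCell N j then P.t i else (uniformCell_nonempty hN j).some
  have hτ : ∀ j i, τ j i ∈ uniformCell N j := fun j i => by
    simp only [τ]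
    split_ifs with h
    exacts [h, (uniformCell_nonempty hN j).some_mem]
  set v : ℕ → X := fun j => ∑ i ∈ range P.n, ((N : ℝ) * ℓ j i) • f (τ j i)
  have hv : ∀ j ∈ Icc 1 N, v j ∈ convexHull ℝ (f '' uniformCell N j) := fun j hj =>
    (convex_convexHull ℝ _).sum_mem (fun i _ => mul_nonneg hN'.le overlap_nonneg)
      (by rw [← mul_sum, P.sum_overlap_uniformCell hj, mul_inv_cancel₀ hN'.ne'])
      fun i _ => subset_convexHull ℝ _ (Set.mem_image_of_mem f (hτ j i))
  set u : X := (N : ℝ)⁻¹ • ∑ j ∈ Icc 1 N, v j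
  have hdiff : u - riemannSum f P
      = ∑ j ∈ Icc 1 N, ∑ i ∈ range P.n, ℓ j i • (f (τ j i) - f (P.t i)) := by
    simp only [P.riemannSum_eq_sum_overlap f hN, u, v, ℓ, smul_sum, smul_smul, smul_sub,
      sum_sub_distrib, inv_mul_cancel_left₀ hN'.ne']
  have hcell : ∀ j ∈ Icc 1 N,
      ‖∑ i ∈ range P.n, ℓ j i • (f (τ j i) - f (P.t i))‖ ≤ 2 * (2 * B) * δ :=
    fun j hj => P.norm_sum_overlap_smul_le hP
      (fun i hi => (norm_sub_le _ _).trans (by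
        linarith [hB _ (uniformCell_subset_Icc hj (hτ j i)), hB _ (P.t_mem_Icc hi)]))
      (fun i _ ht => by rw [show τ j i = P.t i from if_pos ht, sub_self])
  calc ‖x - riemannSum f P‖ = ‖(x - u) + (u - riemannSum f P)‖ := by rw [sub_add_sub_cancel]
    _ ≤ ‖x - u‖ + ‖u - riemannSum f P‖ := norm_add_le _ _
    _ < ε + ∑ _j ∈ Icc 1 N, 2 * (2 * B) * δ := by
        rw [hdiff]
        exact add_lt_add_of_lt_of_le (hx.norm_sub_lt_of_mem_convexHull hv)
          ((norm_sum_le _ _).trans (sum_le_sum hcell))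
    _ = ε + 4 * B * N * δ := by
        rw [sum_const, Nat.card_Icc, add_tsub_cancel_right, nsmul_eq_mul]
        ring

lemma hasRiemannIntegral_of_uniformSumsNear {f : ℝ → X} {x : X}
    (h : ∀ ε > 0, ∃ N > 0, UniformSumsNear f x N ε) : HasRiemannIntegral f x := by
  intro ε hε
  obtain ⟨N₁, hN₁, h₁⟩ := h 1 one_pos
  obtain ⟨B, hB⟩ := h₁.exists_norm_le hN₁
  have hB₀ : 0 ≤ B := (norm_nonneg _).trans (hB 0 ⟨le_rfl, zero_le_one⟩)
  obtain ⟨N, hN, hx⟩ := h (ε / 2) (half_pos hε)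
  have hden : 0 < 8 * B * N + 1 := by positivity
  refine ⟨ε / (8 * B * N + 1), by positivity, fun P hP => ?_⟩
  refine (norm_sub_riemannSum_lt hB hN hx P hP).trans_le ?_
  have hsmall : 4 * B * N * (ε / (8 * B * N + 1)) ≤ ε / 2 := by
    rw [mul_div_assoc', div_le_div_iff₀ hden two_pos]
    nlinarith
  linarith

namespace TaggedPartition

noncomputable def uniform (N : ℕ) (hN : 0 < N) (t : ℕ → ℝ)
    (ht : ∀ j ∈ Icc 1 N, t j ∈ uniformCell N j) : TaggedPartition where
  n := N
  p i := i / N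
  t i := t (i + 1)
  n_pos := hN
  p_zero := by simp
  p_last := div_self (Nat.cast_pos.2 hN).ne'
  p_mono i _ := by gcongr; simp
  t_mem i hi := by
    obtain ⟨h₁, h₂⟩ := ht (i + 1) (mem_Icc.2 ⟨le_add_self, hi⟩)
    push_cast at h₁ h₂ ⊢
    exact ⟨by simpa using h₁.le, h₂.le⟩

variable {N : ℕ} {hN : 0 < N} {t : ℕ → ℝ} {ht : ∀ j ∈ Icc 1 N, t j ∈ uniformCell N j}

lemma uniform_p_succ_sub (i : ℕ) :
    (uniform N hN t ht).p (i + 1) - (uniform N hN t ht).p i = (N : ℝ)⁻¹ := by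
  simp only [uniform]
  push_cast
  ring

lemma uniform_meshLt {δ : ℝ} (hδ : (N : ℝ)⁻¹ < δ) : (uniform N hN t ht).MeshLt δ :=
  fun i _ => uniform_p_succ_sub i ▸ hδ

lemma riemannSum_uniform (f : ℝ → X) :
    riemannSum f (uniform N hN t ht) = (N : ℝ)⁻¹ • ∑ j ∈ Icc 1 N, f (t j) := by
  simp only [riemannSum, uniform_p_succ_sub, ← smul_sum, sum_Icc_one_eq_sum_range]
  rfl

end TaggedPartition

lemma HasRiemannIntegral.exists_uniformSumsNear {f : ℝ → X} {x : X}
    (hx : HasRiemannIntegral f x) {ε : ℝ} (hε : 0 < ε) :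
    ∃ N₀, ∀ N ≥ N₀, UniformSumsNear f x N ε := by
  obtain ⟨δ, hδ, hP⟩ := hx ε hε
  obtain ⟨N₀, hN₀⟩ := exists_nat_gt δ⁻¹
  refine ⟨N₀, fun N hN t ht => ?_⟩
  have hN' : (0 : ℝ) < N := (inv_pos.2 hδ).trans (hN₀.trans_le (by exact_mod_cast hN))
  rw [← TaggedPartition.riemannSum_uniform (hN := Nat.cast_pos.1 hN') (ht := ht)]
  exact hP _ (TaggedPartition.uniform_meshLt ((inv_lt_comm₀ hN' hδ).2
    (hN₀.trans_le (by exact_mod_cast hN))))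

lemma uniformSumsNear_two_pow_iff {f : ℝ → X} {x : X} {m : ℕ} {ε : ℝ} :
    UniformSumsNear f x (2 ^ m) ε ↔ ∀ t : ℕ → ℝ,
      (∀ i : ℕ, 1 ≤ i → i ≤ 2 ^ m →
        t i ∈ Set.Ioo (((i : ℝ) - 1) / 2 ^ m) ((i : ℝ) / 2 ^ m)) →
      ‖x - (2 ^ m : ℝ)⁻¹ • ∑ i ∈ Finset.Icc 1 (2 ^ m), f (t i)‖ < ε := by
  simp only [UniformSumsNear, uniformCell, mem_Icc, and_imp, Nat.cast_pow, Nat.cast_ofNat]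

end UniformSums

theorem riemann_integrable_iff_dyadic_criterion_general
    {X : Type*} [NormedAddCommGroup X] [NormedSpace ℝ X]
    (f : ℝ → X) :
    RiemannIntegrable f ↔
      ∃ x : X, ∀ ε > (0 : ℝ), ∃ n : ℕ, ∀ m ≥ n, ∀ t : ℕ → ℝ,
        (∀ i : ℕ, 1 ≤ i → i ≤ 2 ^ m →
          t i ∈ Set.Ioo (((i : ℝ) - 1) / 2 ^ m) ((i : ℝ) / 2 ^ m)) →
        ‖x - (2 ^ m : ℝ)⁻¹ • ∑ i ∈ Finset.Icc 1 (2 ^ m), f (t i)‖ < ε := by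
  simp only [← uniformSumsNear_two_pow_iff]
  refine exists_congr fun x => ⟨fun hx ε hε => ?_, fun h => ?_⟩
  · obtain ⟨N₀, hN₀⟩ := hx.exists_uniformSumsNear hε
    exact ⟨N₀, fun m hm => hN₀ _ (hm.trans Nat.lt_two_pow_self.le)⟩
  · refine hasRiemannIntegral_of_uniformSumsNear fun ε hε => ?_
    obtain ⟨n, hn⟩ := h ε hε
    exact ⟨2 ^ n, by positivity, hn n le_rfl⟩

theorem riemann_integrable_iff_dyadic_criterion
    {X : Type*} [NormedAddCommGroup X] [NormedSpace ℝ X] [CompleteSpace X]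
    (f : ℝ → X) :
    RiemannIntegrable f ↔
      ∃ x : X, ∀ ε > (0 : ℝ), ∃ n : ℕ, ∀ m ≥ n, ∀ t : ℕ → ℝ,
        (∀ i : ℕ, 1 ≤ i → i ≤ 2 ^ m →
          t i ∈ Set.Ioo (((i : ℝ) - 1) / 2 ^ m) ((i : ℝ) / 2 ^ m)) →
        ‖x - (2 ^ m : ℝ)⁻¹ • ∑ i ∈ Finset.Icc 1 (2 ^ m), f (t i)‖ < ε :=
  riemann_integrable_iff_dyadic_criterion_general f
end

section
/- Let (vᵢ) be a normalized 1-spreading basic sequence. Then the normalized difference sequence wᵢ = (v_{2i} − v_{2i+1})/‖v_{2i} − v_{2i+1}‖ is K-unconditional for some constant K ≥ 1 depending only on the basis constant of (vᵢ). -/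
/-!
Let `dᵢ = v₂ᵢ - v₂ᵢ₊₁`. Spreading makes `(dᵢ)` 1-suppression unconditional: to delete the
coefficient of `dⱼ` from `x = Σ bᵢ dᵢ`, move the pair carrying `dⱼ` to `(2j + m, 2j + m + 1)` and
all later pairs beyond `2j + N`. For each `m < N` this gives a vector of norm `‖x‖`, and these `N`
vectors telescope to `N • z + bⱼ • (v₂ⱼ - v₂ⱼ₊N)`, where `z` has the norm of `x` with `bⱼ` deleted;
hence `‖z‖ ≤ ‖x‖ + O(1/N)`. A sign change is twice a suppression minus the identity, so `K = 3`.
-/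

open Finset MeasureTheory

/-- A (normalized after adding `‖x i‖ = 1`) basic sequence, via the basis-constant inequality. -/
def IsBasicSeq {X : Type*} [NormedAddCommGroup X] [NormedSpace ℝ X] (x : ℕ → X) : Prop :=
  ∃ K : ℝ, 1 ≤ K ∧ ∀ (a : ℕ → ℝ) (n m : ℕ), n ≤ m →
    ‖∑ i ∈ Finset.range n, a i • x i‖ ≤ K * ‖∑ i ∈ Finset.range m, a i • x i‖


lemma norm_le_add_div_of_nsmul_sub_sum_le {E : Type*} [SeminormedAddCommGroup E] [NormedSpace ℝ E]
    {z : E} {s : ℕ → E} {R C : ℝ} {N : ℕ} (hN : 0 < N) (hs : ∀ m < N, ‖s m‖ ≤ R)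
    (hC : ‖(N : ℝ) • z - ∑ m ∈ range N, s m‖ ≤ C) :
    ‖z‖ ≤ R + C / N := by
  have hsum : ‖∑ m ∈ range N, s m‖ ≤ N * R := by
    calc ‖∑ m ∈ range N, s m‖ ≤ ∑ m ∈ range N, ‖s m‖ := norm_sum_le _ _
      _ ≤ ∑ _m ∈ range N, R := sum_le_sum fun m hm => hs m (mem_range.mp hm)
      _ = N * R := by simp
  have hz : N * ‖z‖ ≤ N * R + C := by
    calc N * ‖z‖ = ‖(N : ℝ) • z‖ := by rw [norm_smul, Real.norm_natCast]
      _ ≤ ‖∑ m ∈ range N, s m‖ + ‖(N : ℝ) • z - ∑ m ∈ range N, s m‖ :=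
          norm_le_norm_add_norm_sub' _ _
      _ ≤ N * R + C := add_le_add hsum hC
  rw [add_div' _ _ _ (by positivity), le_div_iff₀ (by positivity)]
  linarith

section PairDiff

variable {E : Type*} [AddCommGroup E] [Module ℝ E]

def pairDiffSum (w : ℕ → E) (b : ℕ → ℝ) (n : ℕ) : E :=
  ∑ i ∈ range n, b i • (w (2 * i) - w (2 * i + 1))

lemma sum_range_two_mul_neg_one_pow_smul (w : ℕ → E) (b : ℕ → ℝ) (n : ℕ) :
    ∑ j ∈ range (2 * n), ((-1) ^ j * b (j / 2)) • w j = pairDiffSum w b n := by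
  induction n with
  | zero => simp [pairDiffSum]
  | succ n ih =>
    have hj : (2 * n + 1) / 2 = n := by omega
    rw [show 2 * (n + 1) = 2 * n + 1 + 1 by ring, sum_range_succ, sum_range_succ, ih,
      pairDiffSum, pairDiffSum, sum_range_succ, pow_succ, hj, Nat.mul_div_cancel_left _ two_pos,
      pow_mul]
    simp only [neg_one_sq, one_pow, one_mul, mul_neg_one, neg_mul, neg_smul, smul_sub]
    abel

lemma pairDiffSum_comp_eq_update_add {w : ℕ → E} {b : ℕ → ℝ} {n j : ℕ} {k₁ k₂ : ℕ → ℕ}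
    (hj : j < n)
    (hk : ∀ i < n, i ≠ j → k₁ (2 * i) = k₂ (2 * i) ∧ k₁ (2 * i + 1) = k₂ (2 * i + 1)) :
    pairDiffSum (w ∘ k₁) b n = pairDiffSum (w ∘ k₂) (Function.update b j 0) n +
      b j • (w (k₁ (2 * j)) - w (k₁ (2 * j + 1))) := by
  rw [← sub_eq_iff_eq_add', pairDiffSum, pairDiffSum, ← sum_sub_distrib,
    sum_eq_single_of_mem j (mem_range.mpr hj)]
  · simp
  · intro i hi hij
    obtain ⟨h0, h1⟩ := hk i (mem_range.mp hi) hij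
    simp [h0, h1, Function.update_of_ne hij]

lemma pairDiffSum_update_of_le {w : ℕ → E} {b : ℕ → ℝ} {n j : ℕ} (hj : n ≤ j) :
    pairDiffSum w (Function.update b j 0) n = pairDiffSum w b n :=
  sum_congr rfl fun i hi => by
    rw [Function.update_of_ne (by have := mem_range.mp hi; omega)]

end PairDiff

section Spreading

variable {E : Type*} [SeminormedAddCommGroup E] [NormedSpace ℝ E]

def IsSpreading (v : ℕ → E) : Prop :=
  ∀ (n : ℕ) (a : ℕ → ℝ) (k : ℕ → ℕ), StrictMono k →
    ‖∑ i ∈ range n, a i • v (k i)‖ = ‖∑ i ∈ range n, a i • v i‖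

variable {v : ℕ → E}

namespace IsSpreading

lemma norm_eq_norm_zero (hv : IsSpreading v) (i : ℕ) : ‖v i‖ = ‖v 0‖ := by
  simpa using hv 1 1 (· + i) (add_left_strictMono)

lemma norm_pairDiffSum_comp (hv : IsSpreading v) {k : ℕ → ℕ} (hk : StrictMono k)
    (b : ℕ → ℝ) (n : ℕ) :
    ‖pairDiffSum (v ∘ k) b n‖ = ‖pairDiffSum v b n‖ := by
  rw [← sum_range_two_mul_neg_one_pow_smul, ← sum_range_two_mul_neg_one_pow_smul]
  exact hv _ _ k hk

lemma norm_pairDiffSum_update_le_add_div (hv : IsSpreading v) (b : ℕ → ℝ) {n j N : ℕ}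
    (hj : j < n) (hN : 0 < N) :
    ‖pairDiffSum v (Function.update b j 0) n‖ ≤
      ‖pairDiffSum v b n‖ + |b j| * (2 * ‖v 0‖) / N := by
  set k : ℕ → ℕ := fun x => if x < 2 * j then x else x + N
  set kₘ : ℕ → ℕ → ℕ := fun m x =>
    if x < 2 * j then x else if x < 2 * j + 2 then x + m else x + N
  have hk : StrictMono k := fun x y hxy => by simp only [k]; split_ifs <;> omega
  have hkₘ : ∀ m < N, StrictMono (kₘ m) := fun m hm x y hxy => by
    simp only [kₘ]; split_ifs <;> omega
  set z := pairDiffSum (v ∘ k) (Function.update b j 0) n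
  have hdecomp : ∀ m < N,
      pairDiffSum (v ∘ kₘ m) b n = z + b j • (v (2 * j + m) - v (2 * j + m + 1)) := by
    intro m hm
    rw [pairDiffSum_comp_eq_update_add hj (k₂ := k) fun i _ hij => by
      simp only [kₘ, k]; split_ifs <;> omega]
    simp only [kₘ]
    rw [if_neg (by omega), if_pos (by omega), if_neg (by omega), if_pos (by omega),
      add_right_comm (2 * j) 1 m]
  have htelescope : ∑ m ∈ range N, pairDiffSum (v ∘ kₘ m) b n =
      (N : ℝ) • z + b j • (v (2 * j) - v (2 * j + N)) := by
    rw [sum_congr rfl fun m hm => hdecomp m (mem_range.mp hm), sum_add_distrib, sum_const,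
      card_range, ← smul_sum, Nat.cast_smul_eq_nsmul]
    exact congrArg (_ + b j • ·) (sum_range_sub' (fun m => v (2 * j + m)) N)
  rw [← hv.norm_pairDiffSum_comp hk]
  refine norm_le_add_div_of_nsmul_sub_sum_le hN
    (fun m hm => (hv.norm_pairDiffSum_comp (hkₘ m hm) b n).le) ?_
  rw [htelescope, sub_add_cancel_left, norm_neg, norm_smul, Real.norm_eq_abs]
  refine mul_le_mul_of_nonneg_left ?_ (abs_nonneg _)
  calc ‖v (2 * j) - v (2 * j + N)‖ ≤ ‖v (2 * j)‖ + ‖v (2 * j + N)‖ := norm_sub_le _ _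
    _ = 2 * ‖v 0‖ := by rw [hv.norm_eq_norm_zero (2 * j), hv.norm_eq_norm_zero (2 * j + N)]; ring

lemma norm_pairDiffSum_update_le (hv : IsSpreading v) (b : ℕ → ℝ) (n j : ℕ) :
    ‖pairDiffSum v (Function.update b j 0) n‖ ≤ ‖pairDiffSum v b n‖ := by
  obtain hj | hj := le_or_gt n j
  · rw [pairDiffSum_update_of_le hj]
  have hlim := (tendsto_const_div_atTop_nhds_zero_nat (|b j| * (2 * ‖v 0‖))).const_add
    ‖pairDiffSum v b n‖
  rw [add_zero] at hlim
  exact ge_of_tendsto hlim <| Filter.eventually_atTop.2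
    ⟨1, fun N hN => hv.norm_pairDiffSum_update_le_add_div b hj hN⟩

lemma norm_pairDiffSum_ite_le (hv : IsSpreading v) (C : Finset ℕ) (b : ℕ → ℝ) (n : ℕ) :
    ‖pairDiffSum v (fun i => if i ∈ C then 0 else b i) n‖ ≤ ‖pairDiffSum v b n‖ := by
  induction C using Finset.induction with
  | empty => simp
  | insert a C _ ih =>
    have hupdate : (fun i => if i ∈ insert a C then 0 else b i) =
        Function.update (fun i => if i ∈ C then 0 else b i) a 0 := by
      ext i
      rcases eq_or_ne i a with rfl | hia
      · simp
      · simp [hia]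
    rw [hupdate]
    exact (hv.norm_pairDiffSum_update_le _ n a).trans ih

lemma norm_pairDiffSum_mul_sign_le (hv : IsSpreading v) {ε : ℕ → ℝ}
    (hε : ∀ i, ε i = 1 ∨ ε i = -1) (b : ℕ → ℝ) (n : ℕ) :
    ‖pairDiffSum v (fun i => ε i * b i) n‖ ≤ 3 * ‖pairDiffSum v b n‖ := by
  classical
  set C := {i ∈ range n | ε i = -1}
  have hsplit : pairDiffSum v (fun i => ε i * b i) n =
      (2 : ℝ) • pairDiffSum v (fun i => if i ∈ C then 0 else b i) n - pairDiffSum v b n := by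
    simp only [pairDiffSum, smul_sum, ← sum_sub_distrib, smul_smul]
    refine sum_congr rfl fun i hi => ?_
    rcases hε i with h | h
    · rw [if_neg (by norm_num [C, h]), h]; module
    · rw [if_pos (by simp [C, h, hi]), h]; module
  calc ‖pairDiffSum v (fun i => ε i * b i) n‖
      ≤ ‖(2 : ℝ) • pairDiffSum v (fun i => if i ∈ C then 0 else b i) n‖ + ‖pairDiffSum v b n‖ := by
        rw [hsplit]; exact norm_sub_le _ _
    _ ≤ 2 * ‖pairDiffSum v b n‖ + ‖pairDiffSum v b n‖ := by
        rw [norm_smul, Real.norm_two]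
        gcongr
        exact hv.norm_pairDiffSum_ite_le C b n
    _ = 3 * ‖pairDiffSum v b n‖ := by ring

end IsSpreading

end Spreading

theorem difference_sequence_of_spreading_is_unconditional_general
    {V : Type*} [NormedAddCommGroup V] [NormedSpace ℝ V]
    (v : ℕ → V)
    (hspread : ∀ (n : ℕ) (a : ℕ → ℝ) (k : ℕ → ℕ), StrictMono k →
      ‖∑ i ∈ Finset.range n, a i • v (k i)‖ = ‖∑ i ∈ Finset.range n, a i • v i‖) :
    ∃ K : ℝ, 1 ≤ K ∧ ∀ (n : ℕ) (a sg : ℕ → ℝ), (∀ i, sg i = 1 ∨ sg i = -1) →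
      ‖∑ i ∈ Finset.range n,
          (sg i * a i) • (‖v (2 * i) - v (2 * i + 1)‖⁻¹ • (v (2 * i) - v (2 * i + 1)))‖ ≤
        K * ‖∑ i ∈ Finset.range n,
          a i • (‖v (2 * i) - v (2 * i + 1)‖⁻¹ • (v (2 * i) - v (2 * i + 1)))‖ := by
  refine ⟨3, by norm_num, fun n a sg hsg => ?_⟩
  have hnormalized : ∀ c : ℕ → ℝ,
      ∑ i ∈ range n, c i • (‖v (2 * i) - v (2 * i + 1)‖⁻¹ • (v (2 * i) - v (2 * i + 1))) =
        pairDiffSum v (fun i => c i * ‖v (2 * i) - v (2 * i + 1)‖⁻¹) n :=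
    fun c => sum_congr rfl fun i _ => smul_smul _ _ _
  rw [hnormalized, hnormalized]
  simpa only [mul_assoc] using IsSpreading.norm_pairDiffSum_mul_sign_le hspread hsg
    (fun i => a i * ‖v (2 * i) - v (2 * i + 1)‖⁻¹) n

theorem difference_sequence_of_spreading_is_unconditional
    {V : Type*} [NormedAddCommGroup V] [NormedSpace ℝ V]
    (v : ℕ → V) (hnorm : ∀ i, ‖v i‖ = 1) (hbasic : IsBasicSeq v)
    (hspread : ∀ (n : ℕ) (a : ℕ → ℝ) (k : ℕ → ℕ), StrictMono k →
      ‖∑ i ∈ Finset.range n, a i • v (k i)‖ = ‖∑ i ∈ Finset.range n, a i • v i‖)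
    (hne : ∀ i, v (2 * i) ≠ v (2 * i + 1)) :
    ∃ K : ℝ, 1 ≤ K ∧ ∀ (n : ℕ) (a sg : ℕ → ℝ), (∀ i, sg i = 1 ∨ sg i = -1) →
      ‖∑ i ∈ Finset.range n,
          (sg i * a i) • (‖v (2 * i) - v (2 * i + 1)‖⁻¹ • (v (2 * i) - v (2 * i + 1)))‖ ≤
        K * ‖∑ i ∈ Finset.range n,
          a i • (‖v (2 * i) - v (2 * i + 1)‖⁻¹ • (v (2 * i) - v (2 * i + 1)))‖ :=
  difference_sequence_of_spreading_is_unconditional_general v hspread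
end

section
/- If X has a basis (eᵢ) and every asymptotic model of X generated by an array of normalized block bases of (eᵢ) is equivalent to the unit vector basis of ℓ₁, then (eᵢ) is a Haar-ℓ₁⁺ sequence. -/
open Finset MeasureTheory

/-- A Haar system of partitions of `ℕ`. -/
structure HaarSystem where
  A : ℕ → ℕ → Set ℕ
  infinite : ∀ n j, j < 2 ^ n → (A n j).Infinite
  cover : ∀ n : ℕ, (⋃ j ∈ Finset.range (2 ^ n), A n j) = Set.univ
  disjoint : ∀ n j j', j < 2 ^ n → j' < 2 ^ n → j ≠ j' → A n j ∩ A n j' = ∅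
  split : ∀ n j, j < 2 ^ n → A n j = A (n + 1) (2 * j) ∪ A (n + 1) (2 * j + 1)

/-- A normalized basic sequence `e` is a Haar-`ℓ₁⁺` sequence: for every Haar system of
partitions there is `C ≥ 1` with
`1/C ≤ lim_n sup { 2⁻ᵐ ‖∑_{j<2ᵐ} e_{i j}‖ : m ≥ n, 2ᵐ ≤ i j ∈ A m j }`. -/
def IsHaarL1Plus {X : Type*} [NormedAddCommGroup X] [NormedSpace ℝ X] (e : ℕ → X) : Prop :=
  ∀ H : HaarSystem, ∃ C : ℝ, 1 ≤ C ∧ ∀ n : ℕ, ∀ ε > (0 : ℝ), ∃ m ≥ n, ∃ i : ℕ → ℕ,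
    (∀ j < 2 ^ m, i j ∈ H.A m j ∧ 2 ^ m ≤ i j) ∧
    1 / C - ε < (2 ^ m : ℝ)⁻¹ * ‖∑ j ∈ Finset.range (2 ^ m), e (i j)‖

/-- `v` (a normalized basis of `V`) is an asymptotic model generated by the array `x`
(row `j` is `x j`). -/
def GeneratesAsymptoticModel {X : Type*} [NormedAddCommGroup X] [NormedSpace ℝ X]
    (x : ℕ → ℕ → X) (V : Type*) [NormedAddCommGroup V] [NormedSpace ℝ V]
    (v : ℕ → V) : Prop :=
  ∃ δ : ℕ → ℝ, (∀ n, 0 < δ n) ∧ Antitone δ ∧ Filter.Tendsto δ Filter.atTop (nhds 0) ∧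
    ∀ (n : ℕ) (i : ℕ → ℕ) (a : ℕ → ℝ),
      (∀ j < n, n ≤ i j) → (∀ j j', j < j' → j' < n → i j < i j') → (∀ j < n, |a j| ≤ 1) →
      |‖∑ j ∈ Finset.range n, a j • x j (i j)‖ - ‖∑ j ∈ Finset.range n, a j • v j‖| < δ n

/-- `v` (a normalized basis of `V`) is a spreading model generated by the sequence `e`. -/
def GeneratesSpreadingModel {X : Type*} [NormedAddCommGroup X] [NormedSpace ℝ X]
    (e : ℕ → X) (V : Type*) [NormedAddCommGroup V] [NormedSpace ℝ V]
    (v : ℕ → V) : Prop :=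
  ∃ δ : ℕ → ℝ, (∀ n, 0 < δ n) ∧ Antitone δ ∧ Filter.Tendsto δ Filter.atTop (nhds 0) ∧
    ∀ (n : ℕ) (i : ℕ → ℕ) (a : ℕ → ℝ),
      (∀ j < n, n ≤ i j) → (∀ j j', j < j' → j' < n → i j < i j') → (∀ j < n, |a j| ≤ 1) →
      |‖∑ j ∈ Finset.range n, a j • e (i j)‖ - ‖∑ j ∈ Finset.range n, a j • v j‖| < δ n

/-- A basic sequence is equivalent to the unit vector basis of `ℓ₁`. -/
def EquivL1Basis {V : Type*} [NormedAddCommGroup V] [NormedSpace ℝ V] (v : ℕ → V) : Prop :=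
  ∃ C : ℝ, 0 < C ∧ ∀ (n : ℕ) (a : ℕ → ℝ),
    (1 / C) * ∑ i ∈ Finset.range n, |a i| ≤ ‖∑ i ∈ Finset.range n, a i • v i‖ ∧
    ‖∑ i ∈ Finset.range n, a i • v i‖ ≤ C * ∑ i ∈ Finset.range n, |a i|

/-- `b` is a Schauder basis of `X`. -/
def IsSchauderBasis {X : Type*} [NormedAddCommGroup X] [NormedSpace ℝ X] (b : ℕ → X) : Prop :=
  ∀ x : X, ∃! a : ℕ → ℝ,
    Filter.Tendsto (fun n => ∑ i ∈ Finset.range n, a i • b i) Filter.atTop (nhds x)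

/-- `x` is a normalized block basis of `b`. -/
def IsNormalizedBlockBasis {X : Type*} [NormedAddCommGroup X] [NormedSpace ℝ X]
    (b : ℕ → X) (x : ℕ → X) : Prop :=
  (∀ j, ‖x j‖ = 1) ∧ ∃ F : ℕ → Finset ℕ, (∀ j, (F j).Nonempty) ∧
    (∀ j, ∀ i ∈ F j, ∀ i' ∈ F (j + 1), i < i') ∧
    ∀ j, x j ∈ Submodule.span ℝ (b '' (F j : Set ℕ))

/-!
Enumerate every Haar set `A m k` increasingly and let these enumerations, level after level, be
the rows of an array of one-vector block bases of `b`. Ramsey's theorem for increasing tuples,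
applied to a finite net of coefficient vectors and followed by a diagonal argument, yields a
common subsequence of columns along which every norm `‖∑ a j • x j (t j)‖` converges as the
tuple `t` moves off to infinity (Halbeisen–Odell). The limits form a seminorm on finitely
supported sequences, and its separation quotient carries an asymptotic model `v` of the array.
By hypothesis `v` is `C`-equivalent to the `ℓ₁` basis, so the sum of the `2 ^ m` vectors of
level `m` has norm at least `2 ^ m / C`; far out in the array the diagonal sums over those rows,
which take one vector from each `A m k`, are almost as large.
-/

open Filter Topology

theorem exists_antitone_infinite {P : ℕ → Set ℕ → Set ℕ → Prop}
    (h : ∀ s M, M.Infinite → ∃ M' ⊆ M, M'.Infinite ∧ P s M M') {M : Set ℕ} (hM : M.Infinite) :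
    ∃ N : ℕ → Set ℕ, N 0 = M ∧ Antitone N ∧ (∀ s, (N s).Infinite) ∧
      ∀ s, P s (N s) (N (s + 1)) := by
  have h' : ∀ s (N : {N : Set ℕ // N.Infinite}),
      ∃ N' : {N : Set ℕ // N.Infinite}, N'.1 ⊆ N.1 ∧ P s N.1 N'.1 := fun s N =>
    let ⟨M', hsub, hinf, hP⟩ := h s N.1 N.2
    ⟨⟨M', hinf⟩, hsub, hP⟩
  choose g hg using h'
  let N : ℕ → {N : Set ℕ // N.Infinite} := fun s => Nat.rec ⟨M, hM⟩ g s
  exact ⟨fun s => (N s).1, rfl, antitone_nat_of_succ_le fun s => (hg s (N s)).1,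
    fun s => (N s).2, fun s => (hg s (N s)).2⟩

theorem exists_strictMono_forall_mem {S : ℕ → Set ℕ} (hS : ∀ s, (S s).Infinite) :
    ∃ l : ℕ → ℕ, StrictMono l ∧ ∀ s, l s ∈ S s := by
  choose g hg using fun s (m : ℕ) => (hS s).exists_gt m
  let l : ℕ → ℕ := fun s => Nat.rec (g 0 0) (fun s m => g (s + 1) m) s
  refine ⟨l, strictMono_nat_of_lt_succ fun s => (hg (s + 1) (l s)).2, fun s => ?_⟩
  cases s <;> exact (hg _ _).1

theorem exists_infinite_forall_le {P : ℕ → Set ℕ → Prop}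
    (hP : ∀ k M M', M' ⊆ M → P k M → P k M')
    (h : ∀ k M, M.Infinite → ∃ M' ⊆ M, M'.Infinite ∧ P k M') (n : ℕ) {M : Set ℕ}
    (hM : M.Infinite) : ∃ M' ⊆ M, M'.Infinite ∧ ∀ k ≤ n, P k M' := by
  induction n with
  | zero =>
    obtain ⟨M', hsub, hinf, hP₀⟩ := h 0 M hM
    exact ⟨M', hsub, hinf, fun k hk => by rwa [Nat.le_zero.1 hk]⟩
  | succ n ih =>
    obtain ⟨M₁, hsub₁, hinf₁, hP₁⟩ := ih
    obtain ⟨M₂, hsub₂, hinf₂, hP₂⟩ := h (n + 1) M₁ hinf₁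
    refine ⟨M₂, hsub₂.trans hsub₁, hinf₂, fun k hk => ?_⟩
    rcases Nat.of_le_succ hk with hk | rfl
    · exact hP k M₁ M₂ hsub₂ (hP₁ k hk)
    · exact hP₂

theorem exists_strictMono_forall_image_Ici {P : ℕ → Set ℕ → Prop}
    (hP : ∀ s M M', M' ⊆ M → P s M → P s M')
    (h : ∀ s M, M.Infinite → ∃ M' ⊆ M, M'.Infinite ∧ P s M') :
    ∃ l : ℕ → ℕ, StrictMono l ∧ ∀ s, P s (l '' Set.Ici s) := by
  obtain ⟨N, -, hanti, hinf, hPN⟩ :=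
    exists_antitone_infinite (P := fun s _ M' => P s M') h Set.infinite_univ
  obtain ⟨l, hl, hlN⟩ := exists_strictMono_forall_mem fun s => hinf (s + 1)
  refine ⟨l, hl, fun s => hP s _ _ ?_ (hPN s)⟩
  rintro _ ⟨i, hi, rfl⟩
  exact hanti (Nat.succ_le_succ hi) (hlN i)

theorem exists_infinite_monochromatic {κ : Type*} [Finite κ] :
    ∀ (n : ℕ) (c : (Fin n → ℕ) → κ) {M : Set ℕ}, M.Infinite →
      ∃ M' ⊆ M, M'.Infinite ∧ ∃ k, ∀ t : Fin n → ℕ, StrictMono t → (∀ j, t j ∈ M') → c t = k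
  | 0, c, M, hM => ⟨M, subset_rfl, hM, c Fin.elim0, fun t _ _ => congrArg c (Subsingleton.elim _ _)⟩
  | n + 1, c, M, hM => by
    -- `N (i + 1)` makes every tuple prefixed by `a i = min (N i)` have the same colour `k i`;
    -- an infinite fibre of `k` then selects the monochromatic set.
    obtain ⟨N, rfl, hanti, hinf, hstep⟩ := exists_antitone_infinite (P := fun _ N N' =>
        (∀ x ∈ N', sInf N < x) ∧ ∃ k, ∀ t : Fin n → ℕ, StrictMono t → (∀ j, t j ∈ N') →
          c (Fin.cons (sInf N) t) = k)
      (fun _ N hN => by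
        obtain ⟨N', hsub, hN', k, hk⟩ := exists_infinite_monochromatic n
          (fun t => c (Fin.cons (sInf N) t)) (hN.sdiff (Set.finite_Iic (sInf N)))
        exact ⟨N', fun x hx => (hsub hx).1, hN', fun x hx => not_le.1 (hsub hx).2, k, hk⟩) hM
    choose hgt k hk using hstep
    set a : ℕ → ℕ := fun i => sInf (N i)
    have ha_mem : ∀ i, a i ∈ N i := fun i => Nat.sInf_mem (hinf i).nonempty
    have ha : StrictMono a := strictMono_nat_of_lt_succ fun i => hgt i _ (ha_mem (i + 1))
    obtain ⟨k₀, hk₀⟩ := Finite.exists_infinite_fiber k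
    refine ⟨a '' (k ⁻¹' {k₀}), ?_, (Set.infinite_coe_iff.1 hk₀).image ha.injective.injOn, k₀, ?_⟩
    · rintro _ ⟨i, -, rfl⟩
      exact hanti (Nat.zero_le i) (ha_mem i)
    · intro t ht htM
      obtain ⟨i, hi, hti⟩ := htM 0
      have htail : ∀ j, Fin.tail t j ∈ N (i + 1) := by
        intro j
        obtain ⟨i', -, hti'⟩ := htM j.succ
        have hii' : i < i' := ha.lt_iff_lt.1 (by rw [hti, hti']; exact ht (Fin.succ_pos j))
        rw [Fin.tail, ← hti']
        exact hanti hii' (ha_mem i')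
      rw [← Fin.cons_self_tail t, ← hti, ← (hi : k i = k₀)]
      exact hk i _ (ht.comp Fin.strictMono_succ) htail

def AlmostConstOn {k : ℕ} (f : (Fin k → ℕ) → ℝ) (M : Set ℕ) (ε : ℝ) : Prop :=
  ∀ t t' : Fin k → ℕ, StrictMono t → StrictMono t' → (∀ j, t j ∈ M) → (∀ j, t' j ∈ M) →
    |f t - f t'| ≤ ε

namespace AlmostConstOn

variable {k : ℕ} {f g : (Fin k → ℕ) → ℝ} {M M' : Set ℕ} {ε η : ℝ}

theorem mono (h : AlmostConstOn f M ε) (hM : M' ⊆ M) (hε : ε ≤ η) : AlmostConstOn f M' η :=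
  fun t t' ht ht' htM ht'M => (h t t' ht ht' (fun j => hM (htM j)) (fun j => hM (ht'M j))).trans hε

theorem of_abs_sub_le (hg : AlmostConstOn g M ε) (hfg : ∀ t, |f t - g t| ≤ η) :
    AlmostConstOn f M (ε + 2 * η) := by
  intro t t' ht ht' htM ht'M
  obtain ⟨h₁, h₁'⟩ := abs_le.1 (hfg t)
  obtain ⟨h₂, h₂'⟩ := abs_le.1 (hfg t')
  obtain ⟨h₃, h₃'⟩ := abs_le.1 (hg t t' ht ht' htM ht'M)
  exact abs_le.2 ⟨by linarith, by linarith⟩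

end AlmostConstOn

theorem exists_infinite_almostConstOn {ι : Type*} [Finite ι] {k : ℕ} (f : ι → (Fin k → ℕ) → ℝ)
    {B : ℝ} (hf : ∀ i t, f i t ∈ Set.Icc 0 B) {ε : ℝ} (hε : 0 < ε) {M : Set ℕ}
    (hM : M.Infinite) : ∃ M' ⊆ M, M'.Infinite ∧ ∀ i, AlmostConstOn (f i) M' ε := by
  have hcol : ∀ i t, ⌊f i t / ε⌋ ∈ Set.Icc 0 ⌊B / ε⌋ := fun i t =>
    ⟨Int.floor_nonneg.2 (div_nonneg (hf i t).1 hε.le),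
      Int.floor_le_floor (div_le_div_of_nonneg_right (hf i t).2 hε.le)⟩
  obtain ⟨M', hsub, hinf, c, hc⟩ := exists_infinite_monochromatic k
    (fun t i => (⟨⌊f i t / ε⌋, hcol i t⟩ : Set.Icc 0 ⌊B / ε⌋)) hM
  refine ⟨M', hsub, hinf, fun i t t' ht ht' htM ht'M => ?_⟩
  have hfloor : ⌊f i t / ε⌋ = ⌊f i t' / ε⌋ :=
    congrArg Subtype.val (congrFun ((hc t ht htM).trans (hc t' ht' ht'M).symm) i)
  have h := Int.abs_sub_lt_one_of_floor_eq_floor hfloor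
  rw [← sub_div, abs_div, abs_of_pos hε, div_lt_one hε] at h
  exact h.le

def Seminorm.ofTendsto {𝕜 E ι : Type*} [NormedField 𝕜] [AddCommGroup E] [Module 𝕜 E]
    {l : Filter ι} [l.NeBot] (p : ι → Seminorm 𝕜 E) (q : E → ℝ)
    (hq : ∀ x, Tendsto (fun i => p i x) l (𝓝 (q x))) : Seminorm 𝕜 E :=
  Seminorm.of q
    (fun x y => le_of_tendsto_of_tendsto' (hq (x + y)) ((hq x).add (hq y)) fun i =>
      map_add_le_add (p i) x y)
    fun c x => tendsto_nhds_unique (hq (c • x)) (by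
      simpa only [map_smul_eq_mul] using (hq x).const_mul ‖c‖)

section Stabilization

variable {X : Type*} [SeminormedAddCommGroup X] [NormedSpace ℝ X]

theorem norm_sum_smul_le {k : ℕ} (a : Fin k → ℝ) {w : Fin k → X} (hw : ∀ j, ‖w j‖ ≤ 1) :
    ‖∑ j, a j • w j‖ ≤ k * ‖a‖ :=
  calc ‖∑ j, a j • w j‖ ≤ ∑ j, ‖a j • w j‖ := norm_sum_le _ _
    _ ≤ ∑ _j : Fin k, ‖a‖ := Finset.sum_le_sum fun j _ => by
      rw [norm_smul]
      exact (mul_le_of_le_one_right (norm_nonneg _) (hw j)).trans (norm_le_pi_norm a j)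
    _ = k * ‖a‖ := by simp

theorem abs_norm_sum_smul_sub_le {k : ℕ} (a a' : Fin k → ℝ) {w : Fin k → X}
    (hw : ∀ j, ‖w j‖ ≤ 1) :
    |‖∑ j, a j • w j‖ - ‖∑ j, a' j • w j‖| ≤ k * ‖a - a'‖ := by
  refine (abs_norm_sub_norm_le _ _).trans ?_
  rw [← Finset.sum_sub_distrib]
  simp_rw [← sub_smul]
  exact norm_sum_smul_le (a - a') hw

theorem almostConstOn_norm_sum_smul {k : ℕ} {w : (Fin k → ℕ) → Fin k → X} {M : Set ℕ} {ε : ℝ}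
    (h : ∀ a : Fin k → ℝ, ‖a‖ ≤ 1 → AlmostConstOn (fun t => ‖∑ j, a j • w t j‖) M ε)
    (a : Fin k → ℝ) : AlmostConstOn (fun t => ‖∑ j, a j • w t j‖) M (ε * ‖a‖) := by
  intro t t' ht ht' htM ht'M
  rcases eq_or_ne a 0 with rfl | ha
  · simp
  have key := h (‖a‖⁻¹ • a) (norm_smul_inv_norm ha).le t t' ht ht' htM ht'M
  simp only [Pi.smul_apply, smul_eq_mul, ← smul_smul, ← Finset.smul_sum, norm_smul, ← mul_sub,
    abs_mul, norm_inv, norm_norm, abs_inv, abs_norm] at key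
  rwa [inv_mul_le_iff₀ (norm_pos_iff.2 ha), mul_comm] at key

theorem exists_infinite_almostConstOn_norm_sum (z : ℕ → ℕ → X) (hz : ∀ j i, ‖z j i‖ ≤ 1)
    (k : ℕ) {ε : ℝ} (hε : 0 < ε) {M : Set ℕ} (hM : M.Infinite) :
    ∃ M' ⊆ M, M'.Infinite ∧ ∀ a : Fin k → ℝ, ‖a‖ ≤ 1 →
      AlmostConstOn (fun t => ‖∑ j, a j • z j (t j)‖) M' ε := by
  set η := ε / (3 * (k + 1)) with hη_def
  have hη : 0 < η := by positivity
  have hkη : k * η ≤ ε / 3 := by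
    rw [hη_def, mul_div_assoc', div_le_div_iff₀ (by positivity) (by norm_num)]
    nlinarith
  obtain ⟨T, hTball, hTfin, hcover⟩ := Metric.finite_approx_of_totallyBounded
    (isCompact_closedBall (0 : Fin k → ℝ) 1).totallyBounded η hη
  have := hTfin.to_subtype
  obtain ⟨M', hsub, hinf, hT⟩ := exists_infinite_almostConstOn
    (fun (a : T) t => ‖∑ j, a.1 j • z j (t j)‖) (B := k)
    (fun a t => ⟨norm_nonneg _, (norm_sum_smul_le _ fun j => hz _ _).trans
      (mul_le_of_le_one_right (Nat.cast_nonneg k) (mem_closedBall_zero_iff.1 (hTball a.2)))⟩)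
    (by positivity : 0 < ε / 3) hM
  refine ⟨M', hsub, hinf, fun a ha => ?_⟩
  obtain ⟨a', ha'T, haa'⟩ := Set.mem_iUnion₂.1 (hcover (mem_closedBall_zero_iff.2 ha))
  refine ((hT ⟨a', ha'T⟩).of_abs_sub_le (η := k * η) fun t =>
    (abs_norm_sum_smul_sub_le a a' fun j => hz _ _).trans ?_).mono subset_rfl (by linarith)
  gcongr
  exact (Metric.mem_ball.1 haa').le

def IsAsymptoticallyStable (y : ℕ → ℕ → X) : Prop :=
  ∀ s k, k ≤ s → ∀ a : Fin k → ℝ,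
    AlmostConstOn (fun t => ‖∑ j, a j • y j (t j)‖) (Set.Ici s) (2⁻¹ ^ s * ‖a‖)

theorem exists_strictMono_isAsymptoticallyStable (z : ℕ → ℕ → X) (hz : ∀ j i, ‖z j i‖ ≤ 1) :
    ∃ l : ℕ → ℕ, StrictMono l ∧ IsAsymptoticallyStable fun j i => z j (l i) := by
  obtain ⟨l, hl, hlP⟩ := exists_strictMono_forall_image_Ici
    (P := fun s M => ∀ k ≤ s, ∀ a : Fin k → ℝ, ‖a‖ ≤ 1 →
      AlmostConstOn (fun t => ‖∑ j, a j • z j (t j)‖) M (2⁻¹ ^ s))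
    (fun s M M' hM hP k hk a ha => (hP k hk a ha).mono hM le_rfl)
    (fun s M hM => exists_infinite_forall_le
      (fun k M M' hM hP a ha => (hP a ha).mono hM le_rfl)
      (fun k M hM => exists_infinite_almostConstOn_norm_sum z hz k (by positivity) hM) s hM)
  refine ⟨l, hl, fun s k hk =>
    almostConstOn_norm_sum_smul (w := fun t j => z j (l (t j))) fun a ha t t' ht ht' hts ht's => ?_⟩
  exact hlP s k hk a ha (l ∘ t) (l ∘ t') (hl.comp ht) (hl.comp ht')
    (fun j => ⟨t j, hts j, rfl⟩) (fun j => ⟨t' j, ht's j, rfl⟩)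

namespace IsAsymptoticallyStable

variable {y : ℕ → ℕ → X}

theorem exists_tendsto_norm_sum (hy : IsAsymptoticallyStable y) {k : ℕ} (a : Fin k → ℝ) :
    ∃ L, Tendsto (fun N => ‖∑ j, a j • y j (N + j)‖) atTop (𝓝 L) ∧
      ∀ t : Fin k → ℕ, StrictMono t → (∀ j, k ≤ t j) →
        |‖∑ j, a j • y j (t j)‖ - L| ≤ 2⁻¹ ^ k * ‖a‖ := by
  have hshift : ∀ N, StrictMono fun j : Fin k => N + (j : ℕ) := fun N _ _ h =>
    Nat.add_lt_add_left h N
  have hcauchy : CauchySeq fun N => ‖∑ j, a j • y j (N + j)‖ := by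
    rw [Metric.cauchySeq_iff']
    intro ε hε
    have hpow := (tendsto_pow_atTop_nhds_zero_of_lt_one (by norm_num)
      (by norm_num : (2 : ℝ)⁻¹ < 1)).mul_const ‖a‖
    obtain ⟨N, hNε, hkN⟩ := ((hpow.eventually (gt_mem_nhds (by simpa using hε))).and
      (eventually_ge_atTop k)).exists
    refine ⟨N, fun n hn => ?_⟩
    rw [Real.dist_eq]
    exact (hy N k hkN a _ _ (hshift n) (hshift N) (fun j => hn.trans (Nat.le_add_right _ _))
      (fun j => Nat.le_add_right _ _)).trans_lt hNε
  obtain ⟨L, hL⟩ := cauchySeq_tendsto_of_complete hcauchy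
  refine ⟨L, hL, fun t ht htk => le_of_tendsto ((hL.const_sub _).abs) ?_⟩
  filter_upwards [eventually_ge_atTop k] with N hN
  exact hy k k le_rfl a _ _ ht (hshift N) htk fun j => hN.trans (Nat.le_add_right _ _)

theorem exists_seminorm_tendsto (hy : IsAsymptoticallyStable y) :
    ∃ p : Seminorm ℝ (ℕ →₀ ℝ), ∀ g, Tendsto
      (fun N => ‖Finsupp.linearCombination ℝ (fun j => y j (N + j)) g‖) atTop (𝓝 (p g)) := by
  have h : ∀ g : ℕ →₀ ℝ, ∃ L, Tendsto
      (fun N => ‖Finsupp.linearCombination ℝ (fun j => y j (N + j)) g‖) atTop (𝓝 L) := by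
    intro g
    obtain ⟨k, hk⟩ := Finset.exists_nat_subset_range g.support
    obtain ⟨L, hL, -⟩ := hy.exists_tendsto_norm_sum fun j : Fin k => g j
    refine ⟨L, hL.congr fun N => ?_⟩
    rw [Finsupp.linearCombination_apply, Finsupp.sum_of_support_subset g hk _ (by simp),
      Fin.sum_univ_eq_sum_range (fun j => g j • y j (N + j))]
  choose q hq using h
  exact ⟨Seminorm.ofTendsto (fun N => (normSeminorm ℝ X).comp
    (Finsupp.linearCombination ℝ fun j => y j (N + j))) q hq, hq⟩

theorem abs_norm_sum_sub_le (hy : IsAsymptoticallyStable y) {p : Seminorm ℝ (ℕ →₀ ℝ)}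
    (hp : ∀ g, Tendsto (fun N => ‖Finsupp.linearCombination ℝ (fun j => y j (N + j)) g‖)
      atTop (𝓝 (p g)))
    {n : ℕ} {i : ℕ → ℕ} {a : ℕ → ℝ} (hin : ∀ j < n, n ≤ i j)
    (hi : ∀ j j', j < j' → j' < n → i j < i j') (ha : ∀ j < n, |a j| ≤ 1) :
    |‖∑ j ∈ range n, a j • y j (i j)‖ - p (∑ j ∈ range n, Finsupp.single j (a j))| ≤ 2⁻¹ ^ n := by
  obtain ⟨L, hL, herr⟩ := hy.exists_tendsto_norm_sum fun j : Fin n => a j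
  have hLp : L = p (∑ j ∈ range n, Finsupp.single j (a j)) := by
    refine tendsto_nhds_unique hL ((hp _).congr fun N => ?_)
    simp [map_sum, Fin.sum_univ_eq_sum_range (fun j => a j • y j (N + j))]
  have ha1 : ‖fun j : Fin n => a j‖ ≤ 1 :=
    (pi_norm_le_iff_of_nonneg zero_le_one).2 fun j => ha j j.2
  have := herr (fun j => i j) (fun j j' h => hi j j' h j'.2) fun j => hin j j.2
  rw [Fin.sum_univ_eq_sum_range (fun j => a j • y j (i j)), hLp] at this
  exact this.trans (mul_le_of_le_one_right (by positivity) ha1)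

end IsAsymptoticallyStable

end Stabilization

theorem IsAsymptoticallyStable.exists_generatesAsymptoticModel {X : Type*}
    [NormedAddCommGroup X] [NormedSpace ℝ X] {y : ℕ → ℕ → X} (hy : IsAsymptoticallyStable y)
    (hy1 : ∀ j i, ‖y j i‖ = 1) :
    ∃ (V : Type) (_ : NormedAddCommGroup V) (_ : NormedSpace ℝ V) (v : ℕ → V),
      (∀ j, ‖v j‖ = 1) ∧ GeneratesAsymptoticModel y V v := by
  obtain ⟨p, hp⟩ := hy.exists_seminorm_tendsto
  let : SeminormedAddCommGroup (ℕ →₀ ℝ) := p.toAddGroupSeminorm.toSeminormedAddCommGroup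
  let : NormedSpace ℝ (ℕ →₀ ℝ) := ⟨fun c g => (map_smul_eq_mul p c g).le⟩
  have hnorm : ∀ g : ℕ →₀ ℝ, ‖SeparationQuotient.mk g‖ = p g := fun g => rfl
  have hpow := tendsto_pow_atTop_nhds_zero_of_lt_one (by norm_num) (by norm_num : (2 : ℝ)⁻¹ < 1)
  refine ⟨SeparationQuotient (ℕ →₀ ℝ), inferInstance, inferInstance,
    fun j => SeparationQuotient.mk (Finsupp.single j 1), fun j => ?_,
    fun n => 2 * 2⁻¹ ^ n, fun n => by positivity,
    fun m n hmn => mul_le_mul_of_nonneg_left (pow_le_pow_of_le_one (by norm_num) (by norm_num) hmn)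
      zero_le_two,
    by simpa using hpow.const_mul 2, fun n i a hin hi ha => ?_⟩
  · rw [hnorm]
    exact tendsto_nhds_unique (hp _) (by simp [hy1])
  · have hsum : ∑ j ∈ range n, a j • SeparationQuotient.mk (Finsupp.single j (1 : ℝ)) =
        SeparationQuotient.mk (∑ j ∈ range n, Finsupp.single j (a j)) := by
      simp only [← SeparationQuotient.mk_smul, Finsupp.smul_single, smul_eq_mul, mul_one]
      exact (map_sum (SeparationQuotient.mkCLM ℝ (ℕ →₀ ℝ)) _ _).symm
    rw [hsum, hnorm]
    exact (hy.abs_norm_sum_sub_le hp hin hi ha).trans_lt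
      (lt_two_mul_self (by positivity))

theorem exists_strictMono_generatesAsymptoticModel {X : Type*} [NormedAddCommGroup X]
    [NormedSpace ℝ X] (z : ℕ → ℕ → X) (hz : ∀ j i, ‖z j i‖ = 1) :
    ∃ l : ℕ → ℕ, StrictMono l ∧ ∃ (V : Type) (_ : NormedAddCommGroup V) (_ : NormedSpace ℝ V)
      (v : ℕ → V), (∀ j, ‖v j‖ = 1) ∧ GeneratesAsymptoticModel (fun j i => z j (l i)) V v := by
  obtain ⟨l, hl, hy⟩ := exists_strictMono_isAsymptoticallyStable z fun j i => (hz j i).le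
  exact ⟨l, hl, hy.exists_generatesAsymptoticModel fun j i => hz j (l i)⟩

theorem sum_range_add_ite_smul {R M : Type*} [Semiring R] [AddCommMonoid M] [Module R M] (r p : ℕ)
    (f : ℕ → M) :
    ∑ j ∈ range (r + p), (if r ≤ j then (1 : R) else 0) • f j = ∑ k ∈ range p, f (r + k) := by
  rw [Finset.sum_range_add, Finset.sum_eq_zero fun j hj => by
    simp [(Finset.mem_range.1 hj).not_ge], zero_add]
  simp

theorem GeneratesAsymptoticModel.exists_lt_norm_sum {X V : Type*} [NormedAddCommGroup X]
    [NormedSpace ℝ X] [NormedAddCommGroup V] [NormedSpace ℝ V] {x : ℕ → ℕ → X} {v : ℕ → V}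
    (hx : GeneratesAsymptoticModel x V v) {C : ℝ}
    (hC : ∀ n (a : ℕ → ℝ), 1 / C * ∑ i ∈ range n, |a i| ≤ ‖∑ i ∈ range n, a i • v i‖)
    {ε : ℝ} (hε : 0 < ε) :
    ∃ N, ∀ r p (i : ℕ → ℕ), N ≤ r + p → StrictMono i → (∀ j < r + p, r + p ≤ i j) →
      p / C - ε < ‖∑ k ∈ range p, x (r + k) (i (r + k))‖ := by
  obtain ⟨δ, -, -, hδ, hmodel⟩ := hx
  obtain ⟨N, hN⟩ := eventually_atTop.1 (hδ.eventually (gt_mem_nhds hε))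
  refine ⟨N, fun r p i hNrp hi hin => ?_⟩
  have hdiff := hmodel (r + p) i (fun j => if r ≤ j then 1 else 0) hin
    (fun j j' h _ => hi h) fun j _ => by split_ifs <;> simp
  have hlower := hC (r + p) fun j => if r ≤ j then 1 else 0
  simp only [sum_range_add_ite_smul] at hdiff hlower
  have habs : ∑ j ∈ range (r + p), |(if r ≤ j then (1 : ℝ) else 0)| = p := by
    simpa [apply_ite] using sum_range_add_ite_smul (R := ℝ) r p fun _ => (1 : ℝ)
  rw [habs, one_div_mul_eq_div] at hlower
  linarith [(abs_lt.1 hdiff).1, hN (r + p) hNrp]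

theorem isNormalizedBlockBasis_comp {X : Type*} [NormedAddCommGroup X] [NormedSpace ℝ X]
    {b : ℕ → X} (hb : ∀ i, ‖b i‖ = 1) {φ : ℕ → ℕ} (hφ : StrictMono φ) :
    IsNormalizedBlockBasis b (b ∘ φ) := by
  refine ⟨fun j => hb _, fun j => {φ j}, fun j => singleton_nonempty _, ?_,
    fun j => Submodule.subset_span ⟨φ j, by simp, rfl⟩⟩
  intro j i hi i' hi'
  rw [mem_singleton] at hi hi'
  exact hi ▸ hi' ▸ hφ (Nat.lt_succ_self j)

namespace HaarSystem

-- Row `r` enumerates `A m k` for `r + 1 = 2 ^ m + k`, `k < 2 ^ m`: the rows `2 ^ m - 1 + k` of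
-- level `m` are consecutive.
noncomputable def row (H : HaarSystem) (r : ℕ) : ℕ → ℕ :=
  Nat.nth (· ∈ H.A (Nat.log 2 (r + 1)) (r + 1 - 2 ^ Nat.log 2 (r + 1)))

theorem row_strictMono (H : HaarSystem) (r : ℕ) : StrictMono (H.row r) := by
  refine Nat.nth_strictMono (H.infinite _ _ ?_)
  have := Nat.lt_pow_succ_log_self one_lt_two (r + 1)
  rw [pow_succ] at this
  omega

theorem row_mem {H : HaarSystem} {m k : ℕ} (hk : k < 2 ^ m) (i : ℕ) :
    H.row (2 ^ m - 1 + k) i ∈ H.A m k := by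
  have hr : 2 ^ m - 1 + k + 1 = 2 ^ m + k := by have := Nat.one_le_two_pow (n := m); omega
  have hlog : Nat.log 2 (2 ^ m + k) = m :=
    Nat.log_eq_of_pow_le_of_lt_pow (Nat.le_add_right _ _) (by rw [pow_succ]; omega)
  rw [row, hr, hlog, Nat.add_sub_cancel_left]
  exact Nat.nth_mem_of_infinite (H.infinite m k hk) i

end HaarSystem

theorem haar_l1_plus_of_asymptotic_models_l1_general
    {X : Type*} [NormedAddCommGroup X] [NormedSpace ℝ X]
    (b : ℕ → X) (hbnorm : ∀ i, ‖b i‖ = 1)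
    (h : ∀ x : ℕ → ℕ → X, (∀ j, IsNormalizedBlockBasis b (x j)) →
      ∀ (V : Type) [NormedAddCommGroup V] [NormedSpace ℝ V] (v : ℕ → V),
        (∀ i, ‖v i‖ = 1) → GeneratesAsymptoticModel x V v → EquivL1Basis v) :
    IsHaarL1Plus b := by
  intro H
  obtain ⟨l, hl, V, _, _, v, hv, hmodel⟩ :=
    exists_strictMono_generatesAsymptoticModel (fun r i => b (H.row r i)) fun r i => hbnorm _
  obtain ⟨C, -, hC⟩ := h _ (fun r => isNormalizedBlockBasis_comp hbnorm
    ((H.row_strictMono r).comp hl)) V v hv hmodel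
  have hC1 : 1 ≤ C := by simpa [hv] using (hC 1 1).2
  refine ⟨C, hC1, fun n ε hε => ?_⟩
  obtain ⟨N, hN⟩ := hmodel.exists_lt_norm_sum (fun n a => (hC n a).1) hε
  set m := max n N
  set r := 2 ^ m - 1
  have hm : m < 2 ^ m := Nat.lt_two_pow_self
  have hsum := hN r (2 ^ m) (fun j => r + 2 ^ m + j) (by omega)
    (fun _ _ h => Nat.add_lt_add_left h _) fun j _ => Nat.le_add_right _ _
  refine ⟨m, le_max_left _ _, fun k => H.row (r + k) (l (r + 2 ^ m + (r + k))),
    fun k hk => ⟨H.row_mem hk _, ?_⟩, ?_⟩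
  · calc 2 ^ m ≤ r + 2 ^ m + (r + k) := by omega
      _ ≤ _ := hl.id_le _
      _ ≤ _ := (H.row_strictMono _).id_le _
  · have hpos : (0 : ℝ) < 2 ^ m := by positivity
    rw [lt_inv_mul_iff₀ hpos]
    push_cast at hsum
    have hε2 : ε ≤ 2 ^ m * ε := le_mul_of_one_le_left hε.le (one_le_pow₀ one_le_two)
    calc (2 : ℝ) ^ m * (1 / C - ε) = 2 ^ m / C - 2 ^ m * ε := by ring
      _ ≤ 2 ^ m / C - ε := by linarith
      _ < _ := hsum

theorem haar_l1_plus_of_asymptotic_models_l1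
    {X : Type*} [NormedAddCommGroup X] [NormedSpace ℝ X] [CompleteSpace X]
    (b : ℕ → X) (hbasis : IsSchauderBasis b) (hbnorm : ∀ i, ‖b i‖ = 1)
    (hbbasic : IsBasicSeq b)
    (h : ∀ x : ℕ → ℕ → X, (∀ j, IsNormalizedBlockBasis b (x j)) →
      ∀ (V : Type) [NormedAddCommGroup V] [NormedSpace ℝ V] (v : ℕ → V),
        (∀ i, ‖v i‖ = 1) → GeneratesAsymptoticModel x V v → EquivL1Basis v) :
    IsHaarL1Plus b :=
  haar_l1_plus_of_asymptotic_models_l1_general b hbnorm h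
end

section
/- For functions g₁, …, gₙ ∈ L₁[0,1], the average over all sign choices of ‖Σᵢ εᵢ gᵢ‖₁ is at least a universal constant times ‖(Σᵢ |gᵢ|²)^{1/2}‖₁; in particular max over signs εᵢ ∈ {±1} of ‖Σᵢ εᵢ gᵢ‖₁ ≥ c ‖(Σᵢ |gᵢ|²)^{1/2}‖₁ for some universal c > 0. -/
open Finset MeasureTheory

/-- Lebesgue measure restricted to `[0,1]`. -/
noncomputable def μ01 : MeasureTheory.Measure ℝ :=
  MeasureTheory.volume.restrict (Set.Icc (0 : ℝ) 1)

/-!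
For fixed reals `a`, the Rademacher sum `X ε = ∑ εᵢ aᵢ` has second moment `∑ aᵢ²` and fourth
moment at most `3 (∑ aᵢ²)²` over the uniform signs. Hölder's inequality in the form
`(𝔼 X²)³ ≤ (𝔼 |X|)² 𝔼 X⁴` then gives `𝔼 |X| ≥ (∑ aᵢ²)^{1/2} / √3`. Applying this with `aᵢ = gᵢ(t)`
and integrating in `t` yields the averaged bound with `c = 1/√3`, and some sign pattern is at
least the average.
-/

lemma Finset.sum_sq_pow_three_le_sq_sum_abs_mul_sum_pow_four {ι : Type*} (s : Finset ι)
    (f : ι → ℝ) : (∑ i ∈ s, f i ^ 2) ^ 3 ≤ (∑ i ∈ s, |f i|) ^ 2 * ∑ i ∈ s, f i ^ 4 := by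
  set S₂ := ∑ i ∈ s, f i ^ 2
  have hS₂ : 0 ≤ S₂ := sum_nonneg fun i _ => sq_nonneg _
  have cauchySchwarz_low : S₂ ^ 2 ≤ (∑ i ∈ s, |f i|) * ∑ i ∈ s, |f i| ^ 3 :=
    sum_sq_le_sum_mul_sum_of_sq_le_mul s (fun i _ => abs_nonneg _) (fun i _ => by positivity)
      fun i _ => le_of_eq <| by rw [← pow_succ', Even.pow_abs ⟨2, rfl⟩]; ring
  have cauchySchwarz_high : (∑ i ∈ s, |f i| ^ 3) ^ 2 ≤ S₂ * ∑ i ∈ s, f i ^ 4 :=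
    sum_sq_le_sum_mul_sum_of_sq_le_mul s (fun i _ => sq_nonneg _) (fun i _ => by positivity)
      fun i _ => le_of_eq <| by rw [← pow_mul, Even.pow_abs ⟨3, rfl⟩]; ring
  have key : S₂ * S₂ ^ 3 ≤ S₂ * ((∑ i ∈ s, |f i|) ^ 2 * ∑ i ∈ s, f i ^ 4) :=
    calc S₂ * S₂ ^ 3 = (S₂ ^ 2) ^ 2 := by ring
      _ ≤ ((∑ i ∈ s, |f i|) * ∑ i ∈ s, |f i| ^ 3) ^ 2 :=
        pow_le_pow_left₀ (sq_nonneg _) cauchySchwarz_low 2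
      _ = (∑ i ∈ s, |f i|) ^ 2 * (∑ i ∈ s, |f i| ^ 3) ^ 2 := by ring
      _ ≤ (∑ i ∈ s, |f i|) ^ 2 * (S₂ * ∑ i ∈ s, f i ^ 4) :=
        mul_le_mul_of_nonneg_left cauchySchwarz_high (sq_nonneg _)
      _ = S₂ * ((∑ i ∈ s, |f i|) ^ 2 * ∑ i ∈ s, f i ^ 4) := by ring
  rcases hS₂.eq_or_lt with hzero | hpos
  · rw [← hzero, zero_pow three_ne_zero]
    positivity
  · exact le_of_mul_le_mul_left key hpos

section SignedSum

variable {n : ℕ}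

def signedSum (ε : Fin n → Bool) (a : Fin n → ℝ) : ℝ :=
  ∑ i, (if ε i then (1 : ℝ) else -1) * a i

lemma sum_signedSum_succ {M : Type*} [AddCommMonoid M] (a : Fin (n + 1) → ℝ) (F : ℝ → M) :
    ∑ ε, F (signedSum ε a) =
      ∑ ε, (F (a 0 + signedSum ε (Fin.tail a)) + F (-a 0 + signedSum ε (Fin.tail a))) := by
  rw [← (Fin.consEquiv fun _ => Bool).sum_comp, Fintype.sum_prod_type, sum_comm]
  refine sum_congr rfl fun ε _ => ?_
  simp [signedSum, Fin.sum_univ_succ, Fin.consEquiv, Fin.tail]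

lemma sum_signedSum_sq (a : Fin n → ℝ) : ∑ ε, signedSum ε a ^ 2 = 2 ^ n * ∑ i, a i ^ 2 := by
  induction n with
  | zero => simp [signedSum]
  | succ n ih =>
    have parallelogram (x y : ℝ) : (x + y) ^ 2 + (-x + y) ^ 2 = 2 * x ^ 2 + 2 * y ^ 2 := by ring
    simp only [sum_signedSum_succ a (· ^ 2), parallelogram, sum_add_distrib, ← mul_sum, ih,
      sum_const, card_univ, Fintype.card_fun, Fintype.card_bool, Fintype.card_fin,
      Fin.sum_univ_succ (fun i => a i ^ 2), Fin.tail, nsmul_eq_mul]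
    push_cast
    ring

lemma sum_signedSum_pow_four_le (a : Fin n → ℝ) :
    ∑ ε, signedSum ε a ^ 4 ≤ 3 * 2 ^ n * (∑ i, a i ^ 2) ^ 2 := by
  induction n with
  | zero => simp [signedSum]
  | succ n ih =>
    have expand (x y : ℝ) :
        (x + y) ^ 4 + (-x + y) ^ 4 = 2 * x ^ 4 + 12 * x ^ 2 * y ^ 2 + 2 * y ^ 4 := by ring
    simp only [sum_signedSum_succ a (· ^ 4), expand, sum_add_distrib, ← mul_sum,
      sum_signedSum_sq, sum_const, card_univ, Fintype.card_fun, Fintype.card_bool,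
      Fintype.card_fin, Fin.sum_univ_succ (fun i => a i ^ 2), nsmul_eq_mul]
    have := ih (Fin.tail a)
    simp only [Fin.tail] at this ⊢
    have h_nonneg : 0 ≤ (2 : ℝ) ^ n * a 0 ^ 4 := by positivity
    push_cast
    rw [pow_succ (2 : ℝ) n]
    linarith

theorem khintchine_pointwise (a : Fin n → ℝ) :
    (√3)⁻¹ * √(∑ i, a i ^ 2) ≤ ((2 : ℝ) ^ n)⁻¹ * ∑ ε, |signedSum ε a| := by
  have hq : 0 ≤ ∑ i, a i ^ 2 := sum_nonneg fun i _ => sq_nonneg _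
  have hA : 0 ≤ ∑ ε, |signedSum ε a| := sum_nonneg fun ε _ => abs_nonneg _
  have holder := sum_sq_pow_three_le_sq_sum_abs_mul_sum_pow_four univ fun ε => signedSum ε a
  rw [sum_signedSum_sq] at holder
  have fourth := mul_le_mul_of_nonneg_left (sum_signedSum_pow_four_le a)
    (sq_nonneg (∑ ε, |signedSum ε a|))
  generalize ∑ i, a i ^ 2 = q at hq holder fourth ⊢
  generalize ∑ ε, |signedSum ε a| = A at hA holder fourth ⊢
  have cubic : (2 ^ n * q ^ 2) * ((2 ^ n) ^ 2 * q) ≤ (2 ^ n * q ^ 2) * (3 * A ^ 2) := by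
    linarith
  have sq_bound : ((2 : ℝ) ^ n) ^ 2 * q ≤ 3 * A ^ 2 := by
    rcases hq.eq_or_lt with hzero | hpos
    · rw [← hzero, mul_zero]
      positivity
    · exact le_of_mul_le_mul_left cubic (by positivity)
  rw [inv_mul_le_iff₀ (by positivity), mul_left_comm, le_inv_mul_iff₀ (by positivity)]
  calc 2 ^ n * √q = √(((2 : ℝ) ^ n) ^ 2 * q) := by
          rw [Real.sqrt_mul (by positivity), Real.sqrt_sq (by positivity)]
      _ ≤ √(3 * A ^ 2) := Real.sqrt_le_sqrt sq_bound
      _ = √3 * A := by rw [Real.sqrt_mul (by norm_num), Real.sqrt_sq hA]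

theorem khintchine_integral {α : Type*} [MeasurableSpace α] {μ : Measure α}
    {g : Fin n → α → ℝ} (hg : ∀ i, Integrable (g i) μ) :
    (√3)⁻¹ * ∫ t, √(∑ i, g i t ^ 2) ∂μ ≤
      ((2 : ℝ) ^ n)⁻¹ * ∑ ε, ∫ t, |signedSum ε (g · t)| ∂μ := by
  have h_int (ε : Fin n → Bool) : Integrable (fun t => |signedSum ε (g · t)|) μ :=
    (integrable_finsetSum _ fun i _ => (hg i).const_mul _).abs
  rw [← integral_const_mul, ← integral_finsetSum _ fun ε _ => h_int ε, ← integral_const_mul]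
  exact integral_mono_of_nonneg (ae_of_all _ fun t => by positivity)
    ((integrable_finsetSum _ fun ε _ => h_int ε).const_mul _)
    (ae_of_all _ fun t => khintchine_pointwise _)

end SignedSum

lemma Fintype.exists_le_of_le_inv_card_mul_sum {ι : Type*} [Fintype ι] [Nonempty ι]
    {f : ι → ℝ} {c : ℝ} (h : c ≤ (Fintype.card ι : ℝ)⁻¹ * ∑ i, f i) : ∃ i, c ≤ f i := by
  rw [← div_eq_inv_mul, ← expect_eq_sum_div_card] at h
  obtain ⟨i, -, hi⟩ := exists_le_of_le_expect univ_nonempty h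
  exact ⟨i, hi⟩

theorem khintchine_square_function_lower_bound :
    ∃ c : ℝ, 0 < c ∧ ∀ (n : ℕ) (g : Fin n → ℝ → ℝ),
      (∀ i, MeasureTheory.Integrable (g i) μ01) →
      (c * ∫ t, Real.sqrt (∑ i, (g i t) ^ 2) ∂μ01 ≤
        ((2 : ℝ) ^ n)⁻¹ * ∑ sg : Fin n → Bool,
          ∫ t, |∑ i, (if sg i then (1 : ℝ) else -1) * g i t| ∂μ01) ∧
      ∃ sg : Fin n → Bool,
        c * ∫ t, Real.sqrt (∑ i, (g i t) ^ 2) ∂μ01 ≤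
          ∫ t, |∑ i, (if sg i then (1 : ℝ) else -1) * g i t| ∂μ01 := by
  refine ⟨(√3)⁻¹, by positivity, fun n g hg => ?_⟩
  have average := khintchine_integral hg
  refine ⟨average, Fintype.exists_le_of_le_inv_card_mul_sum ?_⟩
  simp only [Fintype.card_fun, Fintype.card_bool, Fintype.card_fin, Nat.cast_pow,
    Nat.cast_ofNat]
  exact average
end

section
/- Let X be a Banach space with the Lebesgue property, and let Xₙ be ℓ₁ with the norm n·‖·‖_{ℓ₁}. Then every spreading model of the ℓ₁-sum (⊕ₙ Xₙ)_{ℓ₁} is equivalent to the unit vector basis of ℓ₁, but there is no single constant C such that every spreading model is C-equivalent to the unit vector basis of ℓ₁. -/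
open Finset MeasureTheory

/-
Rescaling the summands, `(⊕ₙ Xₙ)_{ℓ₁}` is isometric to a subspace of `ℓ₁(ℕ × ℕ)`. A normalized
basic sequence there is uniformly separated; a coordinatewise convergent subsequence splits as
`g + uₖ` with `uₖ → 0` coordinatewise and `‖uₖ‖ ≥ d > 0`. Against coordinatewise null sequences the
`ℓ₁`-norm is asymptotically additive, so along fast-growing indices
`‖x + ∑ bⱼ u_{iⱼ}‖ ≥ ‖x‖ + d ∑ |bⱼ| - ε`; this is the lower `ℓ₁`-estimate of the spreading model,
the upper one being the triangle inequality.

The constants cannot be uniform: already in one copy of `ℓ₁` the sequence `(1 - θ) e₀ + θ e_{t+1}`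
is its own spreading model, with norm `(1 - θ) |∑ aⱼ| + θ ∑ |aⱼ|`.
-/

open Filter Topology

theorem exists_strictMono_forall_half_le {s : ℕ → ℝ} {r : ℝ}
    (h : ∀ i j, i < j → r ≤ s i + s j) : ∃ φ : ℕ → ℕ, StrictMono φ ∧ ∀ k, r / 2 ≤ s (φ k) := by
  refine Nat.exists_strictMono_subsequence (P := fun n => r / 2 ≤ s n) fun N => ?_
  by_cases hN : r / 2 ≤ s (N + 1)
  · exact ⟨N + 1, N.lt_succ_self, hN⟩
  · exact ⟨N + 2, by omega, by linarith [h (N + 1) (N + 2) (by omega)]⟩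

namespace lp

section NormOne

variable {ι : Type*} {E : ι → Type*} [∀ i, NormedAddCommGroup (E i)]

theorem hasSum_norm_one (x : lp E 1) : HasSum (fun i => ‖x i‖) ‖x‖ := by
  simpa using lp.hasSum_norm (p := 1) (by simp) x

theorem norm_add_of_disjoint {x y : lp E 1} (h : ∀ i, x i = 0 ∨ y i = 0) :
    ‖x + y‖ = ‖x‖ + ‖y‖ := by
  refine (hasSum_norm_one (x + y)).unique ?_
  convert (hasSum_norm_one x).add (hasSum_norm_one y) using 2 with i
  rcases h i with h | h <;> simp [h]

theorem norm_sum_single_one {F : Type*} [DecidableEq ι] [NormedAddCommGroup F] {k : ℕ → ι}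
    {n : ℕ} (hk : Set.InjOn k (Set.Iio n)) (c : ℕ → F) :
    ‖∑ j ∈ range n, (lp.single 1 (k j) (c j) : lp (fun _ : ι => F) 1)‖
      = ∑ j ∈ range n, ‖c j‖ := by
  induction n with
  | zero => simp
  | succ n ih =>
    rw [sum_range_succ, sum_range_succ, norm_add_of_disjoint, ih (hk.mono (by simp)),
      lp.norm_single one_pos]
    intro q
    by_cases hq : q = k n
    · left
      subst hq
      rw [coeFn_sum, Finset.sum_apply]
      refine sum_eq_zero fun j hj => lp.single_apply_ne _ _ _ fun h => ?_
      have hjn := mem_range.1 hj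
      exact hjn.ne' (hk (Nat.lt_succ_self n) (Nat.lt_succ_of_lt hjn) h)
    · exact Or.inr (lp.single_apply_ne _ _ _ hq)

theorem eventually_norm_add_sub_le_norm_add {h : ℕ → lp E 1}
    (hh : ∀ i, Tendsto (fun n => h n i) atTop (𝓝 0)) (x : lp E 1) {ε : ℝ} (hε : 0 < ε) :
    ∀ᶠ n in atTop, ‖x‖ + ‖h n‖ - ε ≤ ‖x + h n‖ := by
  classical
  obtain ⟨s, hs⟩ : ∃ s : Finset ι, ‖x‖ - ε / 4 < ∑ i ∈ s, ‖x i‖ :=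
    ((hasSum_norm_one x).eventually (lt_mem_nhds (by linarith))).exists
  have hsmall : ∀ᶠ n in atTop, ∑ i ∈ s, ‖h n i‖ < ε / 4 := by
    have : Tendsto (fun n => ∑ i ∈ s, ‖h n i‖) atTop (𝓝 0) := by
      simpa using tendsto_finsetSum s fun i _ => (hh i).norm
    exact this.eventually (gt_mem_nhds (by linarith))
  filter_upwards [hsmall] with n hn
  have hs_sum : HasSum (fun i => if i ∈ s then ‖x i‖ - ‖h n i‖ else 0)
      (∑ i ∈ s, (‖x i‖ - ‖h n i‖)) := by
    simpa using hasSum_sum_of_ne_finset_zero (s := s)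
      (f := fun i => if i ∈ s then ‖x i‖ - ‖h n i‖ else 0) fun i hi => if_neg hi
  -- on `s` the mass of `x` dominates, off `s` the mass of `h n` does
  have hle := hasSum_le (fun i => ?_)
    (((hasSum_norm_one (h n)).sub (hasSum_norm_one x)).add (hs_sum.mul_left 2))
    (hasSum_norm_one (x + h n))
  · rw [Finset.sum_sub_distrib] at hle
    linarith
  · have h1 := norm_le_add_norm_add (x i) (h n i)
    have h2 := norm_le_add_norm_add' (x i) (h n i)
    simp only [coeFn_add, Pi.add_apply]
    split_ifs <;> linarith

end NormOne

section Flatten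

variable {ι κ : Type*} {E : ι → Type*} {F : κ → Type*}
  [∀ i, NormedAddCommGroup (E i)] [∀ i, NormedSpace ℝ (E i)]
  [∀ k, NormedAddCommGroup (F k)] [∀ k, NormedSpace ℝ (F k)]

theorem hasSum_norm_flatten (S : ∀ i, E i →ₗᵢ[ℝ] lp F 1) (x : lp E 1) :
    HasSum (fun q : ι × κ => ‖S q.1 (x q.1) q.2‖) ‖x‖ := by
  have hfiber : ∀ i, HasSum (fun k => ‖S i (x i) k‖) ‖x i‖ := fun i => by
    simpa only [(S i).norm_map] using hasSum_norm_one (S i (x i))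
  have hsum : Summable fun q : ι × κ => ‖S q.1 (x q.1) q.2‖ :=
    (summable_prod_of_nonneg fun _ => norm_nonneg _).2 ⟨fun i => (hfiber i).summable,
      by simpa only [(hfiber _).tsum_eq] using (hasSum_norm_one x).summable⟩
  convert hsum.hasSum
  rw [hsum.tsum_prod' fun i => (hfiber i).summable]
  simp only [(hfiber _).tsum_eq, (hasSum_norm_one x).tsum_eq]

noncomputable def flatten (S : ∀ i, E i →ₗᵢ[ℝ] lp F 1) :
    lp E 1 →ₗᵢ[ℝ] lp (fun q : ι × κ => F q.2) 1 where
  toFun x := ⟨fun q => S q.1 (x q.1) q.2,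
    memℓp_gen (by simpa using (hasSum_norm_flatten S x).summable)⟩
  map_add' x y := by ext q; simp only [coeFn_add, Pi.add_apply, map_add]
  map_smul' c x := by ext q; simp
  norm_map' x := (hasSum_norm_one _).unique (hasSum_norm_flatten S x)

end Flatten

section Compactness

variable {ι : Type*} [Countable ι] {E : ι → Type*} [∀ i, NormedAddCommGroup (E i)]
  [∀ i, ProperSpace (E i)] {p : ENNReal} [Fact (1 ≤ p)]

theorem exists_subseq_tendsto_apply {w : ℕ → lp E p} {R : ℝ} (hw : ∀ k, ‖w k‖ ≤ R) :
    ∃ (φ : ℕ → ℕ) (g : lp E p), StrictMono φ ∧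
      ∀ i, Tendsto (fun k => w (φ k) i) atTop (𝓝 (g i)) := by
  have hp : p ≠ 0 := (zero_lt_one.trans_le Fact.out).ne'
  have hmem : ∀ k, ⇑(w k) ∈ Set.univ.pi fun i => Metric.closedBall (0 : E i) R := fun k i _ =>
    mem_closedBall_zero_iff.2 ((norm_apply_le_norm hp (w k) i).trans (hw k))
  obtain ⟨g, -, φ, hφ, hlim⟩ :=
    (isCompact_univ_pi fun i => isCompact_closedBall (0 : E i) R).tendsto_subseq hmem
  have hg : Memℓp g p := memℓp_of_tendsto (l := atTop)
    (isBounded_iff_forall_norm_le.2 ⟨R, Set.forall_mem_range.2 fun k => hw (φ k)⟩) hlim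
  exact ⟨φ, ⟨g, hg⟩, hφ, fun i => tendsto_pi_nhds.1 hlim i⟩

theorem exists_subseq_sub_tendsto_zero {w : ℕ → lp E p} {R r : ℝ} (hw : ∀ k, ‖w k‖ ≤ R)
    (hsep : ∀ k l, k < l → r ≤ ‖w k - w l‖) :
    ∃ (φ : ℕ → ℕ) (g : lp E p), StrictMono φ ∧
      (∀ i, Tendsto (fun k => (w (φ k) - g) i) atTop (𝓝 0)) ∧ ∀ k, r / 2 ≤ ‖w (φ k) - g‖ := by
  obtain ⟨φ, g, hφ, hlim⟩ := exists_subseq_tendsto_apply hw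
  obtain ⟨ψ, hψ, hlarge⟩ := exists_strictMono_forall_half_le (s := fun k => ‖w (φ k) - g‖)
    fun k l hkl => (hsep _ _ (hφ hkl)).trans <| by
      simpa only [dist_eq_norm] using dist_triangle_right (w (φ k)) (w (φ l)) g
  refine ⟨φ ∘ ψ, g, hφ.comp hψ, fun i => ?_, hlarge⟩
  simpa using ((hlim i).comp hψ.tendsto_atTop).sub_const (g i)

end Compactness

end lp

section SpreadingModels

variable {Y : Type*} [NormedAddCommGroup Y] [NormedSpace ℝ Y]
  {Z : Type*} [NormedAddCommGroup Z] [NormedSpace ℝ Z]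
  {V : Type*} [NormedAddCommGroup V] [NormedSpace ℝ V]

theorem LinearIsometry.norm_sum_smul_apply (f : Y →ₗᵢ[ℝ] Z) (s : Finset ℕ) (a : ℕ → ℝ)
    (x : ℕ → Y) : ‖∑ j ∈ s, a j • f (x j)‖ = ‖∑ j ∈ s, a j • x j‖ := by
  simp only [← map_smul, ← map_sum, f.norm_map]

theorem IsBasicSeq.linearIsometry_comp {e : ℕ → Y} (he : IsBasicSeq e) (f : Y →ₗᵢ[ℝ] Z) :
    IsBasicSeq (f ∘ e) := by
  simpa only [IsBasicSeq, Function.comp_apply, f.norm_sum_smul_apply] using he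

theorem GeneratesSpreadingModel.linearIsometry_comp {e : ℕ → Y} {v : ℕ → V}
    (he : GeneratesSpreadingModel e V v) (f : Y →ₗᵢ[ℝ] Z) :
    GeneratesSpreadingModel (f ∘ e) V v := by
  simpa only [GeneratesSpreadingModel, Function.comp_apply, f.norm_sum_smul_apply] using he

theorem IsBasicSeq.exists_pos_le_norm_sub {e : ℕ → Y} (he : IsBasicSeq e)
    (hnorm : ∀ k, ‖e k‖ = 1) : ∃ r > 0, ∀ k l, k < l → r ≤ ‖e k - e l‖ := by
  obtain ⟨K, hK, hbasic⟩ := he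
  refine ⟨K⁻¹, by positivity, fun k l hkl => ?_⟩
  -- the partial sums of `e k - e l` up to `k` and up to `l`
  have h := hbasic (Pi.single k 1 - Pi.single l 1) (k + 1) (l + 1) (by omega)
  simp only [Pi.sub_apply, sub_smul, sum_sub_distrib, Pi.single_apply, ite_smul, one_smul,
    zero_smul, sum_ite_eq', mem_range] at h
  rw [if_pos (by omega), if_neg (by omega), if_pos (by omega), if_pos (by omega), sub_zero,
    hnorm] at h
  rwa [inv_le_iff_one_le_mul₀ (by linarith), mul_comm]

theorem isBasicSeq_of_le_norm_sum {e : ℕ → Y} (he : ∀ k, ‖e k‖ ≤ 1) {c : ℝ} (hc : 0 < c)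
    (hc1 : c ≤ 1)
    (hlow : ∀ n (a : ℕ → ℝ), c * ∑ j ∈ range n, |a j| ≤ ‖∑ j ∈ range n, a j • e j‖) :
    IsBasicSeq e := by
  refine ⟨c⁻¹, one_le_inv₀ hc |>.2 hc1, fun a n m hnm => ?_⟩
  calc ‖∑ j ∈ range n, a j • e j‖ ≤ ∑ j ∈ range n, |a j| := by
        refine (norm_sum_le _ _).trans (sum_le_sum fun j _ => ?_)
        rw [norm_smul, Real.norm_eq_abs]
        exact mul_le_of_le_one_right (abs_nonneg _) (he j)
    _ ≤ ∑ j ∈ range m, |a j| :=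
        sum_le_sum_of_subset_of_nonneg (range_subset_range.2 hnm) fun j _ _ => abs_nonneg _
    _ ≤ c⁻¹ * ‖∑ j ∈ range m, a j • e j‖ := by
        rw [le_inv_mul_iff₀ hc]
        exact hlow m a

theorem generatesSpreadingModel_self {e : ℕ → Y}
    (hspread : ∀ n (a : ℕ → ℝ) (i : ℕ → ℕ), (∀ j j', j < j' → j' < n → i j < i j') →
      ‖∑ j ∈ range n, a j • e (i j)‖ = ‖∑ j ∈ range n, a j • e j‖) :
    GeneratesSpreadingModel e Y e :=
  ⟨fun n => 1 / ((n : ℝ) + 1), fun n => by positivity, fun _ _ h => by dsimp only; gcongr,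
    tendsto_one_div_add_atTop_nhds_zero_nat,
    fun n i a _ hi _ => by simpa [hspread n a i hi] using Nat.one_div_pos_of_nat (α := ℝ)⟩

theorem sum_range_ite_lt_smul {n m : ℕ} (hnm : n ≤ m) (b : ℕ → ℝ) (x : ℕ → Y) :
    ∑ j ∈ range m, (if j < n then b j else 0) • x j = ∑ j ∈ range n, b j • x j := by
  calc ∑ j ∈ range m, (if j < n then b j else 0) • x j
      = ∑ j ∈ range n, (if j < n then b j else 0) • x j :=
        (sum_subset (range_subset_range.2 hnm) fun j _ hj => by
          rw [if_neg (by simpa using hj), zero_smul]).symm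
    _ = ∑ j ∈ range n, b j • x j := sum_congr rfl fun j hj => by rw [if_pos (mem_range.1 hj)]

theorem GeneratesSpreadingModel.le_norm_sum {e : ℕ → Y} {v : ℕ → V}
    (hsm : GeneratesSpreadingModel e V v) {n : ℕ} {b : ℕ → ℝ} (hb : ∀ j < n, |b j| ≤ 1)
    {L : ℝ} (hL : ∀ m, ∀ ε > 0, ∃ i : ℕ → ℕ, StrictMono i ∧ m ≤ i 0 ∧
      L - ε ≤ ‖∑ j ∈ range n, b j • e (i j)‖) :
    L ≤ ‖∑ j ∈ range n, b j • v j‖ := by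
  obtain ⟨δ, hδ, -, hδlim, happrox⟩ := hsm
  -- pad `b` by zeros up to length `m`, where the approximation error is `δ m`
  have hm : ∀ m ≥ n, L - 2 * δ m ≤ ‖∑ j ∈ range n, b j • v j‖ := fun m hnm => by
    obtain ⟨i, hi, hmi, hLi⟩ := hL m (δ m) (hδ m)
    have := happrox m i (fun j => if j < n then b j else 0)
      (fun j _ => hmi.trans (hi.monotone (Nat.zero_le j))) (fun j j' h _ => hi h)
      (fun j _ => by split_ifs with h; exacts [hb j h, by simp])
    rw [sum_range_ite_lt_smul hnm, sum_range_ite_lt_smul hnm] at this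
    linarith [(abs_lt.1 this).2]
  refine le_of_tendsto ?_ (eventually_atTop.2 ⟨n, hm⟩)
  simpa using (hδlim.const_mul 2).const_sub L

theorem equivL1Basis_of_le_norm_sum {v : ℕ → V} (hv : ∀ k, ‖v k‖ = 1) {c : ℝ} (hc : 0 < c)
    (hlow : ∀ n (b : ℕ → ℝ), (∀ j < n, |b j| ≤ 1) →
      c * ∑ j ∈ range n, |b j| ≤ ‖∑ j ∈ range n, b j • v j‖) :
    EquivL1Basis v := by
  refine ⟨max 1 c⁻¹, by positivity, fun n a => ⟨?_, ?_⟩⟩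
  · set M := ∑ j ∈ range n, |a j| + 1
    have hM : 0 < M := by positivity
    have h := hlow n (fun j => M⁻¹ * a j) fun j hj => by
      rw [abs_mul, abs_inv, abs_of_pos hM, inv_mul_le_one₀ hM]
      linarith [single_le_sum (fun j _ => abs_nonneg (a j)) (mem_range.2 hj)]
    simp only [abs_mul, abs_inv, abs_of_pos hM, ← mul_sum, mul_smul, ← smul_sum, norm_smul,
      Real.norm_eq_abs] at h
    rw [mul_left_comm] at h
    have hc' : 1 / max 1 c⁻¹ ≤ c := by
      rw [one_div, inv_le_comm₀ (by positivity) hc]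
      exact le_max_right _ _
    exact (mul_le_mul_of_nonneg_right hc' (sum_nonneg fun j _ => abs_nonneg _)).trans
      (le_of_mul_le_mul_left h (inv_pos.2 hM))
  · calc ‖∑ j ∈ range n, a j • v j‖ ≤ ∑ j ∈ range n, |a j| := by
          refine (norm_sum_le _ _).trans_eq (sum_congr rfl fun j _ => ?_)
          rw [norm_smul, hv, mul_one, Real.norm_eq_abs]
      _ ≤ max 1 c⁻¹ * ∑ j ∈ range n, |a j| :=
          le_mul_of_one_le_left (sum_nonneg fun j _ => abs_nonneg _) (le_max_left _ _)

theorem exists_strictMono_le_norm_add_sum {u : ℕ → Y} {d : ℝ}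
    (hadd : ∀ (x : Y) (c : ℝ) {ε : ℝ}, 0 < ε →
      ∀ᶠ k in atTop, ‖x‖ + ‖c • u k‖ - ε ≤ ‖x + c • u k‖)
    (hd : ∀ k, d ≤ ‖u k‖) (x : Y) (b : ℕ → ℝ) (m : ℕ) :
    ∀ (n : ℕ) {ε : ℝ}, 0 < ε → ∃ i : ℕ → ℕ, StrictMono i ∧ m ≤ i 0 ∧
      ‖x‖ + d * ∑ j ∈ range n, |b j| - ε ≤ ‖x + ∑ j ∈ range n, b j • u (i j)‖
  | 0, ε, hε => ⟨fun j => m + j, strictMono_id.const_add m, le_rfl, by simp; linarith⟩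
  | n + 1, ε, hε => by
    obtain ⟨i, hi, him, hnorm⟩ :=
      exists_strictMono_le_norm_add_sum hadd hd x b m n (half_pos hε)
    set y := x + ∑ j ∈ range n, b j • u (i j)
    obtain ⟨N, hN⟩ := eventually_atTop.1 (hadd y (b n) (half_pos hε))
    refine ⟨fun j => if j < n then i j else i j + N, fun j k hjk => ?_, ?_, ?_⟩
    · have := hi hjk
      dsimp only
      split_ifs <;> omega
    · dsimp only
      split_ifs <;> omega
    · have hsum : x + ∑ j ∈ range (n + 1), b j • u (if j < n then i j else i j + N)
          = y + b n • u (i n + N) := by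
        rw [sum_range_succ, if_neg (lt_irrefl n), ← add_assoc]
        congr 2
        exact sum_congr rfl fun j hj => by rw [if_pos (mem_range.1 hj)]
      have hstep := hN (i n + N) (Nat.le_add_left N (i n))
      have hlast : |b n| * d ≤ ‖b n • u (i n + N)‖ := by
        rw [norm_smul, Real.norm_eq_abs]
        exact mul_le_mul_of_nonneg_left (hd _) (abs_nonneg _)
      rw [hsum, sum_range_succ, mul_add]
      linarith

end SpreadingModels

namespace lp

theorem equivL1Basis_of_generatesSpreadingModel {ι : Type*} [Countable ι] {E : ι → Type*}
    [∀ i, NormedAddCommGroup (E i)] [∀ i, NormedSpace ℝ (E i)] [∀ i, ProperSpace (E i)]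
    {V : Type*} [NormedAddCommGroup V] [NormedSpace ℝ V]
    {e : ℕ → lp E 1} (he : ∀ k, ‖e k‖ = 1) (hb : IsBasicSeq e) {v : ℕ → V}
    (hv : ∀ k, ‖v k‖ = 1) (hsm : GeneratesSpreadingModel e V v) : EquivL1Basis v := by
  obtain ⟨r, hr, hsep⟩ := hb.exists_pos_le_norm_sub he
  obtain ⟨φ, g, hφ, hnull, hlarge⟩ := exists_subseq_sub_tendsto_zero (fun k => (he k).le) hsep
  set u := fun k => e (φ k) - g
  have hadd (x : lp E 1) (c : ℝ) {ε : ℝ} (hε : 0 < ε) :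
      ∀ᶠ k in atTop, ‖x‖ + ‖c • u k‖ - ε ≤ ‖x + c • u k‖ :=
    eventually_norm_add_sub_le_norm_add (fun i => by
      simpa only [coeFn_smul, Pi.smul_apply, smul_zero] using (hnull i).const_smul c) x hε
  refine equivL1Basis_of_le_norm_sum hv (half_pos hr) fun n b hb => hsm.le_norm_sum hb ?_
  intro m ε hε
  obtain ⟨i, hi, hmi, hnorm⟩ :=
    exists_strictMono_le_norm_add_sum hadd hlarge ((∑ j ∈ range n, b j) • g) b m n hε
  refine ⟨φ ∘ i, hφ.comp hi, hmi.trans (hφ.id_le _), ?_⟩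
  have hsplit : (∑ j ∈ range n, b j) • g + ∑ j ∈ range n, b j • u (i j)
      = ∑ j ∈ range n, b j • e (φ (i j)) := by
    simp only [u, smul_sub, sum_sub_distrib, sum_smul]
    abel
  rw [hsplit] at hnorm
  simp only [Function.comp_apply]
  linarith [norm_nonneg ((∑ j ∈ range n, b j) • g)]

noncomputable def tiltedBasis (θ : ℝ) (t : ℕ) : lp (fun _ : ℕ => ℝ) 1 :=
  lp.single 1 0 (1 - θ) + lp.single 1 (t + 1) θ

variable {θ : ℝ}

theorem norm_sum_smul_tiltedBasis (h0 : 0 ≤ θ) (h1 : θ ≤ 1) {n : ℕ} {i : ℕ → ℕ}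
    (hi : Set.InjOn i (Set.Iio n)) (a : ℕ → ℝ) :
    ‖∑ j ∈ range n, a j • tiltedBasis θ (i j)‖
      = (1 - θ) * |∑ j ∈ range n, a j| + θ * ∑ j ∈ range n, |a j| := by
  have hsum : ∑ j ∈ range n, a j • tiltedBasis θ (i j)
      = lp.single 1 0 ((∑ j ∈ range n, a j) * (1 - θ))
        + ∑ j ∈ range n, lp.single 1 (i j + 1) (a j * θ) := by
    simp only [tiltedBasis, smul_add, sum_add_distrib, ← sum_smul]
    simp only [← lp.single_smul, smul_eq_mul]
  have hinj : Set.InjOn (fun j => i j + 1) (Set.Iio n) := fun j hj j' hj' h =>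
    hi hj hj' (Nat.succ_injective h)
  rw [hsum, norm_add_of_disjoint, lp.norm_single one_pos, norm_sum_single_one hinj]
  · simp only [Real.norm_eq_abs, abs_mul, abs_of_nonneg h0, abs_of_nonneg (sub_nonneg.2 h1),
      ← sum_mul]
    ring
  · intro q
    rcases eq_or_ne q 0 with rfl | hq
    · right
      rw [coeFn_sum, Finset.sum_apply]
      exact sum_eq_zero fun j _ => lp.single_apply_ne _ _ _ (by omega)
    · exact Or.inl (lp.single_apply_ne _ _ _ hq)

theorem norm_sum_smul_tiltedBasis_id (h0 : 0 ≤ θ) (h1 : θ ≤ 1) (n : ℕ) (a : ℕ → ℝ) :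
    ‖∑ j ∈ range n, a j • tiltedBasis θ j‖
      = (1 - θ) * |∑ j ∈ range n, a j| + θ * ∑ j ∈ range n, |a j| :=
  norm_sum_smul_tiltedBasis h0 h1 (i := id) (Set.injOn_id _) a

theorem norm_tiltedBasis (h0 : 0 ≤ θ) (h1 : θ ≤ 1) (t : ℕ) : ‖tiltedBasis θ t‖ = 1 := by
  simpa using norm_sum_smul_tiltedBasis h0 h1 (n := 1) (i := fun _ => t)
    (fun j hj j' hj' _ => by simp_all) fun _ => 1

theorem isBasicSeq_tiltedBasis (h0 : 0 < θ) (h1 : θ ≤ 1) : IsBasicSeq (tiltedBasis θ) :=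
  isBasicSeq_of_le_norm_sum (fun t => (norm_tiltedBasis h0.le h1 t).le) h0 h1 fun n a => by
    rw [norm_sum_smul_tiltedBasis_id h0.le h1]
    exact le_add_of_nonneg_left (mul_nonneg (sub_nonneg.2 h1) (abs_nonneg _))

theorem generatesSpreadingModel_tiltedBasis (h0 : 0 ≤ θ) (h1 : θ ≤ 1) :
    GeneratesSpreadingModel (tiltedBasis θ) _ (tiltedBasis θ) :=
  generatesSpreadingModel_self fun n a i hi => by
    rw [norm_sum_smul_tiltedBasis h0 h1 (StrictMonoOn.injOn fun j _ j' hj' h => hi j j' h hj') a,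
      norm_sum_smul_tiltedBasis_id h0 h1]

end lp

theorem not_exists_uniform_equivL1Basis {Z : Type*} [NormedAddCommGroup Z] [NormedSpace ℝ Z]
    (f : lp (fun _ : ℕ => ℝ) 1 →ₗᵢ[ℝ] Z) :
    ¬ ∃ C : ℝ, 0 < C ∧ ∀ e : ℕ → Z, (∀ i, ‖e i‖ = 1) → IsBasicSeq e →
        ∀ (V : Type) [NormedAddCommGroup V] [NormedSpace ℝ V] (v : ℕ → V),
          (∀ i, ‖v i‖ = 1) → GeneratesSpreadingModel e V v →
          ∀ (n : ℕ) (a : ℕ → ℝ),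
            (1 / C) * ∑ i ∈ range n, |a i| ≤ ‖∑ i ∈ range n, a i • v i‖ ∧
            ‖∑ i ∈ range n, a i • v i‖ ≤ C * ∑ i ∈ range n, |a i| := by
  rintro ⟨C, hC, hbound⟩
  set θ := (C + 1)⁻¹
  have hθ0 : 0 < θ := by positivity
  have hθ1 : θ ≤ 1 := inv_le_one_of_one_le₀ (by linarith)
  -- `‖v₀ - v₁‖ = 2θ` is too small for the constant `C`
  have h := (hbound (f ∘ lp.tiltedBasis θ) (fun t => by simp [lp.norm_tiltedBasis hθ0.le hθ1])
    ((lp.isBasicSeq_tiltedBasis hθ0 hθ1).linearIsometry_comp f) _ (lp.tiltedBasis θ)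
    (lp.norm_tiltedBasis hθ0.le hθ1)
    ((lp.generatesSpreadingModel_tiltedBasis hθ0.le hθ1).linearIsometry_comp f)
    2 fun j => if j = 0 then 1 else -1).1
  rw [lp.norm_sum_smul_tiltedBasis_id hθ0.le hθ1] at h
  norm_num [sum_range_succ] at h
  exact (inv_lt_inv₀ (by positivity) hC |>.2 (lt_add_one C)).not_ge h

noncomputable def LinearEquiv.smulSymmIsometry {F G : Type*} [NormedAddCommGroup F]
    [NormedSpace ℝ F] [NormedAddCommGroup G] [NormedSpace ℝ G] (T : F ≃ₗ[ℝ] G) {c : ℝ}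
    (hc : 0 ≤ c) (hT : ∀ x, ‖T x‖ = c * ‖x‖) : G →ₗᵢ[ℝ] F where
  toLinearMap := c • T.symm.toLinearMap
  norm_map' y := by simp [norm_smul, abs_of_nonneg hc, ← hT]

theorem l1_sum_of_scaled_l1_spreading_models_general
    (E : ℕ → Type) [∀ n, NormedAddCommGroup (E n)] [∀ n, NormedSpace ℝ (E n)]
    (T : ∀ n : ℕ, lp (fun _ : ℕ => ℝ) 1 ≃ₗ[ℝ] E n)
    (hT : ∀ (n : ℕ) (x : lp (fun _ : ℕ => ℝ) 1), ‖T n x‖ = ((n : ℝ) + 1) * ‖x‖) :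
    (∀ e : ℕ → lp E 1, (∀ i, ‖e i‖ = 1) → IsBasicSeq e →
      ∀ (V : Type) [NormedAddCommGroup V] [NormedSpace ℝ V] (v : ℕ → V),
        (∀ i, ‖v i‖ = 1) → GeneratesSpreadingModel e V v → EquivL1Basis v)
    ∧ ¬ ∃ C : ℝ, 0 < C ∧ ∀ e : ℕ → lp E 1, (∀ i, ‖e i‖ = 1) → IsBasicSeq e →
        ∀ (V : Type) [NormedAddCommGroup V] [NormedSpace ℝ V] (v : ℕ → V),
          (∀ i, ‖v i‖ = 1) → GeneratesSpreadingModel e V v →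
          ∀ (n : ℕ) (a : ℕ → ℝ),
            (1 / C) * ∑ i ∈ Finset.range n, |a i| ≤ ‖∑ i ∈ Finset.range n, a i • v i‖ ∧
            ‖∑ i ∈ Finset.range n, a i • v i‖ ≤ C * ∑ i ∈ Finset.range n, |a i| := by
  refine ⟨fun e he hb V _ _ v hv hsm => ?_, not_exists_uniform_equivL1Basis ?_⟩
  · let F := lp.flatten fun n => (T n).smulSymmIsometry (by positivity) (hT n)
    exact lp.equivL1Basis_of_generatesSpreadingModel (e := F ∘ e) (fun k => by simp [he])
      (hb.linearIsometry_comp F) hv (hsm.linearIsometry_comp F)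
  · refine LinearMap.toLinearIsometry ((lp.lsingle 1 0).comp (T 0).toLinearMap)
      (AddMonoidHomClass.isometry_of_norm _ fun x => ?_)
    simpa using hT 0 x

theorem l1_sum_of_scaled_l1_spreading_models
    (X : Type*) [NormedAddCommGroup X] [NormedSpace ℝ X] [CompleteSpace X]
    (hX : LebesgueProperty X)
    (E : ℕ → Type) [∀ n, NormedAddCommGroup (E n)] [∀ n, NormedSpace ℝ (E n)]
    [∀ n, CompleteSpace (E n)]
    (T : ∀ n : ℕ, lp (fun _ : ℕ => ℝ) 1 ≃ₗ[ℝ] E n)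
    (hT : ∀ (n : ℕ) (x : lp (fun _ : ℕ => ℝ) 1), ‖T n x‖ = ((n : ℝ) + 1) * ‖x‖) :
    (∀ e : ℕ → lp E 1, (∀ i, ‖e i‖ = 1) → IsBasicSeq e →
      ∀ (V : Type) [NormedAddCommGroup V] [NormedSpace ℝ V] (v : ℕ → V),
        (∀ i, ‖v i‖ = 1) → GeneratesSpreadingModel e V v → EquivL1Basis v)
    ∧ ¬ ∃ C : ℝ, 0 < C ∧ ∀ e : ℕ → lp E 1, (∀ i, ‖e i‖ = 1) → IsBasicSeq e →
        ∀ (V : Type) [NormedAddCommGroup V] [NormedSpace ℝ V] (v : ℕ → V),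
          (∀ i, ‖v i‖ = 1) → GeneratesSpreadingModel e V v →
          ∀ (n : ℕ) (a : ℕ → ℝ),
            (1 / C) * ∑ i ∈ Finset.range n, |a i| ≤ ‖∑ i ∈ Finset.range n, a i • v i‖ ∧
            ‖∑ i ∈ Finset.range n, a i • v i‖ ≤ C * ∑ i ∈ Finset.range n, |a i| :=
  l1_sum_of_scaled_l1_spreading_models_general E T hT
end
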